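/- arXiv:1702.00190 — 2 statements merged into one kernel-verified Lean document; each statement's English description precedes it below -/
import Mathlib

section
/- If (T,t) and (T',t') are two discriminating symbolically dated phylogenetic trees on X with δ_(T,t)(x,y,z) = δ_(T',t')(x,y,z) for all x,y,z ∈ X, then (T,t) and (T',t') are isomorphic: there is a graph isomorphism φ from T to T' that fixes every element of X and satisfies t'(φ(v)) = t(v) for every vertex v of T. -/
/-!
Every vertex of a phylogenetic tree is the median of three leaves, and a vertex lies on the path
between the leaves `p` and `q` iff it is the median of `p`, `q` and a third leaf. Hence it suffices
to show that two leaf triples have the same median in one tree iff they do in the other: the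
induced bijection then preserves betweenness, hence adjacency, and `δ` transports the labels.

Suppose `z` and `w` branch off the path `[x, y]` at the same vertex `v` of the first tree, but at
vertices `a ≠ b` of the second. Every vertex `u` of `[a, b]` is where some leaf `e` branches off
`[x, y]`; according to where `e` branches off in the first tree, one of the triples `x y e`,
`y e w`, `x e z` has median `v` in the first tree and `u` in the second, so `u` carries the label
of `v`. The labels are then constant along `[a, b]`, contradicting discrimination. General triples
with a common median are joined by such exchanges of one leaf.
-/

namespace PhyloPaper

variable {V X M : Type}

/-- The degree of a vertex: the number of its neighbors. -/
noncomputable def deg (G : SimpleGraph V) (v : V) : ℕ := (G.neighborSet v).ncard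

/-- `v` lies on the (unique, in a tree) path between `x` and `y`. -/
def OnPath (G : SimpleGraph V) (x y v : V) : Prop :=
  ∀ p : G.Walk x y, p.IsPath → v ∈ p.support

/-- `m` is a median of `x, y, z`: it lies on all three pairwise paths. -/
def IsMedian (G : SimpleGraph V) (x y z m : V) : Prop :=
  OnPath G x y m ∧ OnPath G y z m ∧ OnPath G x z m

/-- An (unrooted) phylogenetic tree on `X`: a tree whose leaf set is (the image of) `X`
and which has no vertex of degree 2. -/
structure IsPhyloTree (G : SimpleGraph V) (leaf : X → V) : Prop where
  isTree : G.IsTree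
  leaf_inj : Function.Injective leaf
  leaf_iff : ∀ v : V, (∃ x : X, leaf x = v) ↔ deg G v = 1
  no_deg_two : ∀ v : V, deg G v ≠ 2

/-- A phylogenetic tree is binary if every interior vertex (degree ≥ 2) has degree 3. -/
def IsBinary (G : SimpleGraph V) : Prop := ∀ v : V, 2 ≤ deg G v → deg G v = 3

/-- A symbolic dating map sends every leaf to `⊙` (modelled as `none`). -/
def IsDatingMap (leaf : X → V) (t : V → Option M) : Prop := ∀ x : X, t (leaf x) = none

/-- A dating map is discriminating if adjacent vertices get different values. -/
def Discriminating (G : SimpleGraph V) (t : V → Option M) : Prop :=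
  ∀ u v : V, G.Adj u v → t u ≠ t v

/-- `δ` is the ternary map induced by the dated tree `(G, leaf, t)`:
`δ x y z = t (med (leaf x) (leaf y) (leaf z))`. -/
def InducedDelta (G : SimpleGraph V) (leaf : X → V) (t : V → Option M)
    (δ : X → X → X → Option M) : Prop :=
  ∀ x y z : X, ∃ m : V, IsMedian G (leaf x) (leaf y) (leaf z) m ∧ δ x y z = t m

/-- The (well-defined, for symmetric `δ`) value of `δ` on a 3-element subset `T` is `a`. -/
def ValOn (δ : X → X → X → Option M) [DecidableEq X] (T : Finset X) (a : Option M) : Prop :=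
  ∃ x y z : X, x ≠ y ∧ x ≠ z ∧ y ≠ z ∧ T = {x, y, z} ∧ δ x y z = a

/-- `S` is `n`-`m` partitioned by `δ`: `δ` takes exactly two values on the 3-element
subsets of `S`, one value on exactly `n` of them and the other on exactly `m` of them. -/
def Partitioned [DecidableEq X] (δ : X → X → X → Option M) (S : Finset X) (n m : ℕ) : Prop :=
  ∃ a b : Option M, a ≠ b ∧
    {T : Finset X | T ∈ S.powersetCard 3 ∧ ValOn δ T a}.ncard = n ∧
    {T : Finset X | T ∈ S.powersetCard 3 ∧ ValOn δ T b}.ncard = m ∧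
    ∀ T ∈ S.powersetCard 3, ValOn δ T a ∨ ValOn δ T b

/-- Condition (1): `δ` is symmetric under all permutations of its arguments. -/
def Symm3 (δ : X → X → X → Option M) : Prop :=
  ∀ x y z : X, δ x y z = δ y x z ∧ δ x y z = δ x z y ∧ δ x y z = δ z y x

/-- Condition (2): `δ x y z = ⊙` iff `x, y, z` are not pairwise distinct. -/
def VanishCond (δ : X → X → X → Option M) : Prop :=
  ∀ x y z : X, δ x y z = none ↔ (x = y ∨ y = z ∨ x = z)

/-- `a, b, c, d` are pairwise distinct. -/
def P4 (a b c d : X) : Prop := a ≠ b ∧ a ≠ c ∧ a ≠ d ∧ b ≠ c ∧ b ≠ d ∧ c ≠ d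

/-- `a, b, c, d, e` are pairwise distinct. -/
def P5 (a b c d e : X) : Prop := P4 a b c d ∧ a ≠ e ∧ b ≠ e ∧ c ≠ e ∧ d ≠ e

/-- Condition (3): on four distinct taxa `δ` takes at most 2 values, and if exactly 2,
then the 4-set is 2-2 partitioned. -/
def FourPointCond [DecidableEq X] (δ : X → X → X → Option M) : Prop :=
  ∀ x y z u : X, P4 x y z u →
    ({δ x y z, δ x y u, δ x z u, δ y z u} : Set (Option M)).ncard ≤ 2 ∧
    (({δ x y z, δ x y u, δ x z u, δ y z u} : Set (Option M)).ncard = 2 →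
      Partitioned δ ({x, y, z, u} : Finset X) 2 2)

/-- Condition (4): no 5-element subset of `X` is 5-5 partitioned by `δ`. -/
def FivePointCond [DecidableEq X] (δ : X → X → X → Option M) : Prop :=
  ∀ S : Finset X, S.card = 5 → ¬ Partitioned δ S 5 5

/-- A symbolic ternary metric. -/
def IsSymbolicTernaryMetric [DecidableEq X] (δ : X → X → X → Option M) : Prop :=
  Symm3 δ ∧ VanishCond δ ∧ FourPointCond δ ∧ FivePointCond δ

/-- Condition (*): `δ` is fully resolved. -/
def FullyResolved [DecidableEq X] (δ : X → X → X → Option M) : Prop :=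
  ∀ x y z u : X, P4 x y z u →
    ({δ x y z, δ x y u, δ x z u, δ y z u} : Set (Option M)).ncard = 1 →
    ∃ e : X, Partitioned δ ({x, y, z, u, e} : Finset X) 4 6

/-- The tree displays the quartet `ab|cd`: the path from `a` to `b` is
vertex-disjoint from the path from `c` to `d`. -/
def Displays (G : SimpleGraph V) (leaf : X → V) (a b c d : X) : Prop :=
  ∃ p : G.Walk (leaf a) (leaf b), p.IsPath ∧
    ∃ q : G.Walk (leaf c) (leaf d), q.IsPath ∧ ∀ v : V, v ∈ p.support → v ∉ q.support

/-- `Q a b c d` represents membership of the quartet `ab|cd`; a quartet system must be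
invariant under the symmetries of quartets and only contain genuine quartets. -/
def IsQuartetSystem (Q : X → X → X → X → Prop) : Prop :=
  ∀ a b c d : X, (Q a b c d → P4 a b c d) ∧ (Q a b c d ↔ Q b a c d) ∧
    (Q a b c d ↔ Q a b d c) ∧ (Q a b c d ↔ Q c d a b)

/-- Thin: at most one of the three quartets on any 4 taxa. -/
def Thin (Q : X → X → X → X → Prop) : Prop :=
  ∀ a b c d : X, P4 a b c d →
    ¬(Q a b c d ∧ Q a c b d) ∧ ¬(Q a b c d ∧ Q a d b c) ∧ ¬(Q a c b d ∧ Q a d b c)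

/-- Transitive quartet system. -/
def TransitiveQ (Q : X → X → X → X → Prop) : Prop :=
  ∀ a b c d e : X, P5 a b c d e → Q a b c e → Q a b d e → Q a b c d

/-- Saturated quartet system. -/
def SaturatedQ (Q : X → X → X → X → Prop) : Prop :=
  ∀ a b c d e : X, P5 a b c d e → Q a b c d → (Q a e c d ∨ Q a b c e)

/-- Complete: exactly one of the three quartets on any 4 distinct taxa. -/
def CompleteQ (Q : X → X → X → X → Prop) : Prop :=
  ∀ a b c d : X, P4 a b c d →
    (Q a b c d ∨ Q a c b d ∨ Q a d b c) ∧
    ¬(Q a b c d ∧ Q a c b d) ∧ ¬(Q a b c d ∧ Q a d b c) ∧ ¬(Q a c b d ∧ Q a d b c)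

/-- `δ` generates the quartet `xy|zu`. -/
def Generates (δ : X → X → X → Option M) (x y z u : X) : Prop :=
  P4 x y z u ∧
  ((δ x z u = δ y z u ∧ δ y z u ≠ δ x y z ∧ δ x y z = δ x y u) ∨
   (δ x y z = δ x y u ∧ δ x y u = δ x z u ∧ δ x z u = δ y z u ∧
    ∃ e : X, δ x y e = δ x y z ∧ δ z u e = δ x y z ∧
      δ x u e ≠ δ x y z ∧ δ x u e = δ x z e ∧ δ x z e = δ y z e ∧ δ y z e = δ y u e))

/-- A rooted phylogenetic tree on `X` with root `ρ`: a tree whose leaves (in the rooted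
sense: out-degree 0, i.e. non-root vertices of degree 1) are exactly the image of `X`,
and with no non-root vertex of in-degree one and out-degree one (i.e. degree 2). -/
structure IsRootedPhyloTree (G : SimpleGraph V) (ρ : V) (leaf : X → V) : Prop where
  isTree : G.IsTree
  leaf_inj : Function.Injective leaf
  leaf_iff : ∀ v : V, (∃ x : X, leaf x = v) ↔ (v ≠ ρ ∧ deg G v = 1)
  no_in_out_deg_one : ∀ v : V, v ≠ ρ → deg G v ≠ 2

/-- `d` is the binary map induced by the rooted dated tree:
`d x y = t (lca x y)`, where the last common ancestor is the median of `ρ, x, y`. -/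
def InducedD (G : SimpleGraph V) (ρ : V) (leaf : X → V) (t : V → Option M)
    (d : X → X → Option M) : Prop :=
  ∀ x y : X, ∃ m : V, IsMedian G ρ (leaf x) (leaf y) m ∧ d x y = t m

/-- Symbolic ultrametric: conditions (U1)-(U4). -/
def IsSymbolicUltrametric (d : X → X → Option M) : Prop :=
  (∀ x y : X, d x y = none ↔ x = y) ∧
  (∀ x y : X, d x y = d y x) ∧
  (∀ x y z : X, ({d x y, d x z, d y z} : Set (Option M)).ncard ≤ 2) ∧
  ¬ ∃ x y u v : X, P4 x y u v ∧ d x y = d y u ∧ d y u = d u v ∧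
      d u v ≠ d y v ∧ d y v = d x v ∧ d x v = d x u

/-- `x` and `y` are `m`-equivalent with respect to `δ`. -/
def MEquiv (δ : X → X → X → Option M) (m : Option M) (x y : X) : Prop :=
  (∃ z : X, δ x y z = m) ∧
  ∀ u v : X, u ≠ x → u ≠ y → v ≠ x → v ≠ y → (δ x u v = m ↔ δ y u v = m)

/-- `x ∼_δ y`: `x` and `y` are `m`-equivalent for some `m`. -/
def DeltaEquiv (δ : X → X → X → Option M) (x y : X) : Prop :=
  ∃ m : Option M, MEquiv δ m x y

/-- `C` is a pseudo-cherry of the tree: `C` has at least 2 elements and is exactly the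
set of leaves adjacent to some interior vertex `v`. -/
def IsPseudoCherry (G : SimpleGraph V) (leaf : X → V) (C : Set X) : Prop :=
  2 ≤ C.ncard ∧ ∃ v : V, 2 ≤ deg G v ∧ C = {x : X | G.Adj (leaf x) v}

end PhyloPaper

namespace SimpleGraph.IsTree

variable {V : Type*} {G : SimpleGraph V} (hG : G.IsTree)

noncomputable def path (u v : V) : G.Walk u v := (hG.existsUnique_path u v).exists.choose

theorem path_isPath (u v : V) : (hG.path u v).IsPath :=
  (hG.existsUnique_path u v).exists.choose_spec

theorem eq_path {u v : V} {p : G.Walk u v} (hp : p.IsPath) : p = hG.path u v :=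
  (hG.existsUnique_path u v).unique hp (hG.path_isPath u v)

def Between (u w v : V) : Prop := w ∈ (hG.path u v).support

theorem between_left (u v : V) : hG.Between u u v := Walk.start_mem_support _

theorem between_right (u v : V) : hG.Between u v v := Walk.end_mem_support _

theorem path_reverse (u v : V) : (hG.path u v).reverse = hG.path v u :=
  hG.eq_path (hG.path_isPath u v).reverse

variable {hG}

theorem Between.symm {u w v : V} (h : hG.Between u w v) : hG.Between v w u := by
  rw [Between, ← path_reverse, Walk.support_reverse, List.mem_reverse]
  exact h

theorem between_self_iff {u w : V} : hG.Between u w u ↔ w = u := by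
  rw [Between, ← hG.eq_path Walk.IsPath.nil]
  simp

theorem Between.path_eq_append {u w v : V} (h : hG.Between u w v) :
    hG.path u v = (hG.path u w).append (hG.path w v) := by
  classical
  rw [← hG.eq_path ((hG.path_isPath u v).takeUntil h),
    ← hG.eq_path ((hG.path_isPath u v).dropUntil h)]
  exact (Walk.take_spec _ h).symm

theorem Between.length_path {u w v : V} (h : hG.Between u w v) :
    (hG.path u v).length = (hG.path u w).length + (hG.path w v).length := by
  rw [h.path_eq_append, Walk.length_append]

theorem Between.between_iff {u w v c : V} (h : hG.Between u w v) :
    hG.Between u c v ↔ hG.Between u c w ∨ hG.Between w c v := by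
  rw [Between, h.path_eq_append, Walk.mem_support_append_iff]
  rfl

theorem Between.trans_left {u w v c : V} (h : hG.Between u w v) (hc : hG.Between u c w) :
    hG.Between u c v := h.between_iff.2 (Or.inl hc)

theorem Between.trans_right {u w v c : V} (h : hG.Between u w v) (hc : hG.Between w c v) :
    hG.Between u c v := h.between_iff.2 (Or.inr hc)

theorem between_iff_forall {u w v : V} :
    hG.Between u w v ↔ ∀ c, hG.Between u c w → hG.Between w c v → c = w := by
  classical
  constructor
  · intro h c h₁ h₂
    have hnd := (hG.path_isPath u v).support_nodup
    rw [h.path_eq_append, Walk.support_append] at hnd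
    rw [Between, ← Walk.cons_tail_support, List.mem_cons] at h₂
    exact h₂.resolve_right fun h₂ ↦ List.disjoint_of_nodup_append hnd h₁ h₂
  · intro H
    have hnd := (hG.path_isPath w v).support_nodup
    rw [← Walk.cons_tail_support] at hnd
    have hpath : ((hG.path u w).append (hG.path w v)).IsPath := by
      refine Walk.IsPath.mk' ?_
      rw [Walk.support_append]
      refine (hG.path_isPath u w).support_nodup.append hnd.of_cons fun c h₁ h₂ ↦ ?_
      have hc : c = w := H c h₁ (by rw [Between, ← Walk.cons_tail_support]; exact .tail _ h₂)
      exact (List.nodup_cons.1 hnd).1 (hc ▸ h₂)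
    rw [Between, ← hG.eq_path hpath, Walk.mem_support_append_iff]
    exact Or.inl (hG.between_right u w)

theorem Between.eq_of_between_of_between {u w v c : V} (h : hG.Between u w v)
    (h₁ : hG.Between u c w) (h₂ : hG.Between w c v) : c = w :=
  between_iff_forall.1 h c h₁ h₂

theorem Between.trans_right_left {u w v c : V} (h : hG.Between u w v) (hc : hG.Between w c v) :
    hG.Between u w c :=
  between_iff_forall.2 fun _ h₁ h₂ ↦ h.eq_of_between_of_between h₁ (hc.trans_left h₂)

theorem Between.trans_left_right {u w v c : V} (h : hG.Between u w v) (hc : hG.Between u c w) :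
    hG.Between c w v :=
  between_iff_forall.2 fun _ h₁ h₂ ↦ h.eq_of_between_of_between (hc.trans_right h₁) h₂

theorem Between.antisymm {u a b : V} (h₁ : hG.Between u a b) (h₂ : hG.Between u b a) : a = b :=
  h₂.eq_of_between_of_between h₁ (hG.between_right b a)

theorem Between.total {u v a b : V} (ha : hG.Between u a v) (hb : hG.Between u b v) :
    hG.Between u a b ∨ hG.Between u b a :=
  (hb.between_iff.1 ha).imp id hb.trans_right_left

variable (hG)

/-- The first step from `u` towards `a`; note that `next u u = u`. -/
noncomputable def next (u a : V) : V := (hG.path u a).snd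

theorem adj_next {u a : V} (h : u ≠ a) : G.Adj u (hG.next u a) :=
  Walk.adj_snd (Walk.not_nil_of_ne h)

theorem between_next (u a : V) : hG.Between u (hG.next u a) a :=
  Walk.getVert_mem_support _ _

variable {hG}

theorem eq_next_of_adj {u n a : V} (hn : G.Adj u n) (h : hG.Between u n a) : n = hG.next u a :=
  hG.isAcyclic.eq_snd_of_adj_start (hG.path_isPath u a) hn h

theorem next_eq_next {u w a : V} (h : hG.Between u w a) (hw : w ≠ u) :
    hG.next u w = hG.next u a :=
  eq_next_of_adj (hG.adj_next hw.symm) (h.trans_left (hG.between_next u w))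

theorem between_iff_next_ne {u a b : V} (ha : a ≠ u) :
    hG.Between a u b ↔ hG.next u a ≠ hG.next u b := by
  constructor
  · intro h he
    have hn := h.eq_of_between_of_between (hG.between_next u a).symm (he ▸ hG.between_next u b)
    exact (hG.adj_next ha.symm).ne hn.symm
  · intro hne
    refine between_iff_forall.2 fun c h₁ h₂ ↦ by_contra fun hc ↦ hne ?_
    rw [← next_eq_next h₁.symm hc, next_eq_next h₂ hc]

theorem adj_iff_between {u v : V} :
    G.Adj u v ↔ u ≠ v ∧ ∀ w, hG.Between u w v → w = u ∨ w = v := by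
  constructor
  · intro h
    refine ⟨h.ne, fun w hw ↦ ?_⟩
    rw [Between, ← hG.eq_path (Path.singleton h).isPath] at hw
    simpa using hw
  · rintro ⟨hne, H⟩
    have hadj := hG.adj_next hne
    rcases H _ (hG.between_next u v) with h | h
    · exact absurd h hadj.ne'
    · rwa [h] at hadj

theorem existsUnique_median (x y z : V) :
    ∃! m, hG.Between x m y ∧ hG.Between y m z ∧ hG.Between x m z := by
  classical
  obtain ⟨m, hm, hmax⟩ :=
    ((hG.path x y).support.toFinset.filter (hG.Between x · z)).exists_max_image
      (fun c ↦ (hG.path x c).length) ⟨x, by simpa using hG.between_left x z⟩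
  simp only [Finset.mem_filter, List.mem_toFinset] at hm hmax
  obtain ⟨hmy, hmz⟩ : hG.Between x m y ∧ hG.Between x m z := hm
  -- `m` is the vertex of `[x, y] ∩ [x, z]` farthest from `x`
  have hfar : ∀ c, hG.Between x c y → hG.Between x c z → hG.Between x m c → c = m := by
    intro c hcy hcz hmc
    have := hmax c ⟨hcy, hcz⟩
    rw [hmc.length_path] at this
    exact (Walk.eq_of_length_eq_zero (p := hG.path m c) (by omega)).symm
  have hymz : hG.Between y m z := between_iff_forall.2 fun c h₁ h₂ ↦
    hfar c (hmy.trans_right h₁.symm) (hmz.trans_right h₂) (hmz.trans_right_left h₂)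
  refine ⟨m, ⟨hmy, hymz, hmz⟩, fun m' ⟨h₁, h₂, h₃⟩ ↦ ?_⟩
  rcases hmy.total h₁ with h | h
  · exact hfar m' h₁ h₃ h
  · exact (h₂.eq_of_between_of_between (hmy.trans_left_right h).symm
      (hmz.trans_left_right h)).symm

variable (hG)

noncomputable def median (x y z : V) : V := (hG.existsUnique_median x y z).exists.choose

theorem median_spec (x y z : V) : hG.Between x (hG.median x y z) y ∧
    hG.Between y (hG.median x y z) z ∧ hG.Between x (hG.median x y z) z :=
  (hG.existsUnique_median x y z).exists.choose_spec

theorem between_median₁₂ (x y z : V) : hG.Between x (hG.median x y z) y :=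
  (hG.median_spec x y z).1

theorem between_median₂₃ (x y z : V) : hG.Between y (hG.median x y z) z :=
  (hG.median_spec x y z).2.1

theorem between_median₁₃ (x y z : V) : hG.Between x (hG.median x y z) z :=
  (hG.median_spec x y z).2.2

variable {hG}

theorem median_eq {x y z m : V} (h₁ : hG.Between x m y) (h₂ : hG.Between y m z)
    (h₃ : hG.Between x m z) : hG.median x y z = m :=
  (hG.existsUnique_median x y z).unique (hG.median_spec x y z) ⟨h₁, h₂, h₃⟩

theorem median_comm₁₂ (x y z : V) : hG.median y x z = hG.median x y z :=
  median_eq (hG.between_median₁₂ x y z).symm (hG.between_median₁₃ x y z)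
    (hG.between_median₂₃ x y z)

theorem median_comm₂₃ (x y z : V) : hG.median x z y = hG.median x y z :=
  median_eq (hG.between_median₁₃ x y z) (hG.between_median₂₃ x y z).symm
    (hG.between_median₁₂ x y z)

theorem median_eq_of_between {x y c : V} (h : hG.Between x c y) : hG.median x y c = c :=
  median_eq h (hG.between_right y c) (hG.between_right x c)

theorem median_eq_median_of_between {x u a b : V} (ha : hG.Between x u a)
    (hb : hG.Between x u b) : hG.median x a b = hG.median u a b :=
  median_eq (ha.trans_right (hG.between_median₁₂ u a b)) (hG.between_median₂₃ u a b)
    (hb.trans_right (hG.between_median₁₃ u a b))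

theorem median_eq_of_between_median {x y z c : V} (h : hG.Between (hG.median x y z) c z) :
    hG.median x y c = hG.median x y z :=
  median_eq (hG.between_median₁₂ x y z) ((hG.between_median₂₃ x y z).trans_right_left h)
    ((hG.between_median₁₃ x y z).trans_right_left h)

theorem Between.between_or_between {a v c : V} (h : hG.Between a v c) (b : V) :
    hG.Between a v b ∨ hG.Between b v c :=
  ((hG.between_median₁₂ a c b).between_iff.1 h).imp
    (fun h' ↦ (hG.between_median₁₃ a c b).trans_left h')
    (fun h' ↦ (hG.between_median₂₃ a c b).symm.trans_right h')

/-- If `e` branches off the path `[x, y]` strictly closer to `x` than `z` does, then `e` branches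
off `[x, z]` at the same vertex. -/
theorem median_eq_of_between_medians {x y z e : V}
    (h : hG.Between x (hG.median x y e) (hG.median x y z))
    (hne : hG.median x y e ≠ hG.median x y z) : hG.median x e z = hG.median x y e := by
  set u := hG.median x y e
  have hxuz : hG.Between x u z := (hG.between_median₁₃ x y z).trans_left h
  rw [median_eq_median_of_between (hG.between_median₁₃ x y e) hxuz]
  set m := hG.median u e z
  have hm : hG.median x y m = u := median_eq_of_between_median (hG.between_median₁₂ u e z)
  rcases ((hG.between_median₁₃ x y z).trans_left_right h).between_iff.1
    (hG.between_median₁₃ u e z) with hum | hbm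
  · rw [← hm,
      median_eq_of_between ((hG.between_median₁₂ x y z).trans_left (h.trans_right hum))]
  · exact absurd (hm.symm.trans (median_eq_of_between_median hbm)) hne

theorem median_eq_of_between_medians' {x y z e : V}
    (h : hG.Between x (hG.median x y e) (hG.median x y z))
    (hne : hG.median x y e ≠ hG.median x y z) : hG.median y e z = hG.median x y z := by
  have h' : hG.Between y (hG.median y x z) (hG.median y x e) := by
    rw [median_comm₁₂, median_comm₁₂ x]
    exact ((hG.between_median₁₂ x y z).trans_left_right h).symm
  have hne' : hG.median y x z ≠ hG.median y x e := by
    rw [median_comm₁₂, median_comm₁₂ x]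
    exact hne.symm
  rw [← median_comm₂₃, median_eq_of_between_medians h' hne', median_comm₁₂]

end SimpleGraph.IsTree

namespace PhyloPaper

open SimpleGraph SimpleGraph.IsTree Function

section Degree

variable {V : Type} {G : SimpleGraph V}

theorem deg_ne_zero_of_adj [Finite V] {u n : V} (h : G.Adj u n) : deg G u ≠ 0 :=
  ((Set.ncard_pos (Set.toFinite _)).2 ⟨n, h⟩).ne'

theorem exists_adj_ne_ne [Finite V] {u : V} (h : 3 ≤ deg G u) (a b : V) :
    ∃ n, G.Adj u n ∧ n ≠ a ∧ n ≠ b := by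
  by_contra! H
  have hsub : G.neighborSet u ⊆ {a, b} := fun n hn ↦
    (eq_or_ne n a).elim Or.inl fun hna ↦ Or.inr (H n hn hna)
  have := (Set.ncard_le_ncard hsub).trans (Set.ncard_insert_le a {b})
  rw [Set.ncard_singleton] at this
  exact absurd h (by unfold deg; omega)

theorem exists_deg_eq_one_between [Fintype V] (hG : G.IsTree) {u n : V} (h : G.Adj u n) :
    ∃ w, deg G w = 1 ∧ hG.Between u n w := by
  classical
  obtain ⟨w, hw, hmax⟩ := (Finset.univ.filter (hG.Between u n ·)).exists_max_image
    (fun w ↦ (hG.path u w).length) ⟨n, by simpa using hG.between_right u n⟩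
  simp only [Finset.mem_filter, Finset.mem_univ, true_and] at hw hmax
  have hwu : w ≠ u := by rintro rfl; exact h.ne (between_self_iff.1 hw).symm
  refine ⟨w, Set.ncard_eq_one.2 ⟨hG.next w u, Set.eq_singleton_iff_unique_mem.2
    ⟨hG.adj_next hwu, fun n' hn' ↦ by_contra fun hne ↦ ?_⟩⟩, hw⟩
  -- a second neighbour of `w` would lead farther away from `u`
  have hb : hG.Between u w n' := (between_iff_next_ne hwu.symm).2
    (by rwa [← eq_next_of_adj hn' (hG.between_right w n'), ne_comm])
  have := hmax n' (hb.trans_left hw)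
  rw [hb.length_path] at this
  exact hn'.ne (Walk.eq_of_length_eq_zero (p := hG.path w n') (by omega))

end Degree

namespace IsPhyloTree

variable {V X : Type} [Fintype V] {G : SimpleGraph V} {leaf : X → V}

theorem three_le_deg (hT : IsPhyloTree G leaf) {u n : V} (hu : ∀ x, leaf x ≠ u)
    (h : G.Adj u n) : 3 ≤ deg G u := by
  have h₁ : deg G u ≠ 1 := fun h₁ ↦ let ⟨x, hx⟩ := (hT.leaf_iff u).2 h₁; hu x hx
  have := deg_ne_zero_of_adj h
  have := hT.no_deg_two u
  omega

theorem exists_between_leaf (hT : IsPhyloTree G leaf) {u n : V} (h : G.Adj u n) :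
    ∃ x, hT.isTree.Between u n (leaf x) := by
  obtain ⟨w, hw, hb⟩ := exists_deg_eq_one_between hT.isTree h
  obtain ⟨x, rfl⟩ := (hT.leaf_iff w).2 hw
  exact ⟨x, hb⟩

theorem exists_leaf_between_between (hT : IsPhyloTree G leaf) {u b : V} (a : V) (hb : b ≠ u) :
    ∃ x, hT.isTree.Between (leaf x) u a ∧ hT.isTree.Between (leaf x) u b := by
  by_cases hu : ∃ x, leaf x = u
  · obtain ⟨x, rfl⟩ := hu
    exact ⟨x, hT.isTree.between_left _ _, hT.isTree.between_left _ _⟩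
  push Not at hu
  obtain ⟨n, hn, hna, hnb⟩ := exists_adj_ne_ne
    (hT.three_le_deg hu (hT.isTree.adj_next hb.symm)) (hT.isTree.next u a)
    (hT.isTree.next u b)
  obtain ⟨x, hx⟩ := hT.exists_between_leaf hn
  have hbetween : ∀ c, n ≠ hT.isTree.next u c → hT.isTree.Between (leaf x) u c :=
    fun _ hc ↦ (between_iff_next_ne (hu x)).2 (by rwa [← eq_next_of_adj hn hx])
  exact ⟨x, hbetween a hna, hbetween b hnb⟩

theorem exists_median_eq_of_between (hT : IsPhyloTree G leaf) {p q : X} {w : V}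
    (h : hT.isTree.Between (leaf p) w (leaf q)) :
    ∃ c, hT.isTree.median (leaf p) (leaf q) (leaf c) = w := by
  rcases eq_or_ne (leaf q) w with hq | hq
  · exact ⟨q, hq ▸ median_eq_of_between (hT.isTree.between_right _ _)⟩
  obtain ⟨c, hcp, hcq⟩ := hT.exists_leaf_between_between (leaf p) hq
  exact ⟨c, median_eq h hcq.symm hcp.symm⟩

theorem between_leaves_iff (hT : IsPhyloTree G leaf) {p q : X} {w : V} :
    hT.isTree.Between (leaf p) w (leaf q) ↔
      ∃ c, hT.isTree.median (leaf p) (leaf q) (leaf c) = w :=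
  ⟨hT.exists_median_eq_of_between, fun ⟨_, hc⟩ ↦ hc ▸ hT.isTree.between_median₁₂ _ _ _⟩

theorem exists_median_eq [Nonempty X] (hT : IsPhyloTree G leaf) (v : V) :
    ∃ x y z, hT.isTree.median (leaf x) (leaf y) (leaf z) = v := by
  obtain ⟨x₀⟩ := ‹Nonempty X›
  rcases eq_or_ne (leaf x₀) v with rfl | hv
  · exact ⟨x₀, x₀, x₀, median_eq_of_between (hT.isTree.between_left _ _)⟩
  obtain ⟨p, hp, -⟩ := hT.exists_leaf_between_between (leaf x₀) hv
  obtain ⟨c, hc⟩ := hT.exists_median_eq_of_between hp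
  exact ⟨p, x₀, c, hc⟩

theorem between_iff_forall_leaves (hT : IsPhyloTree G leaf) {u w v : V} :
    hT.isTree.Between u w v ↔ ∀ p q, hT.isTree.Between (leaf p) u (leaf q) →
      hT.isTree.Between (leaf p) v (leaf q) → hT.isTree.Between (leaf p) w (leaf q) := by
  refine ⟨fun h p q hu hv ↦ ?_, fun H ↦ by_contra fun hw ↦ ?_⟩
  · rcases hu.total hv with huv | hvu
    · exact hv.trans_left (huv.trans_right h)
    · exact hu.trans_left (hvu.trans_right h.symm)
  have hwu : w ≠ u := by rintro rfl; exact hw (hT.isTree.between_left w v)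
  have hwv : w ≠ v := by rintro rfl; exact hw (hT.isTree.between_right u w)
  -- extend `[u, v]` to a path between leaves that avoids `w`
  obtain ⟨p, hpv, hpw⟩ := hT.exists_leaf_between_between v hwu
  obtain ⟨q, hqp, hqw⟩ := hT.exists_leaf_between_between (leaf p) hwv
  rcases hqp.symm.between_iff.1 (H p q (hqp.symm.trans_left hpv) hqp.symm) with h | h
  · rcases hpv.between_iff.1 h with h' | h'
    · exact hwu (hpw.antisymm h').symm
    · exact hw h'
  · exact hwv (hqw.antisymm h.symm).symm

end IsPhyloTree

section Dating

variable {V X M : Type} {G : SimpleGraph V} {leaf : X → V} {t : V → Option M}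

theorem onPath_iff (hG : G.IsTree) {x y v : V} : OnPath G x y v ↔ hG.Between x v y :=
  ⟨fun h ↦ h _ (hG.path_isPath x y), fun h _ hp ↦ hG.eq_path hp ▸ h⟩

theorem InducedDelta.apply_eq {δ : X → X → X → Option M} (hδ : InducedDelta G leaf t δ)
    (hG : G.IsTree) (x y z : X) : δ x y z = t (hG.median (leaf x) (leaf y) (leaf z)) := by
  obtain ⟨m, ⟨h₁, h₂, h₃⟩, h⟩ := hδ x y z
  rw [h, median_eq ((onPath_iff hG).1 h₁) ((onPath_iff hG).1 h₂) ((onPath_iff hG).1 h₃)]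

theorem Discriminating.eq_of_forall_between (hd : Discriminating G t) (hG : G.IsTree)
    {a b : V} {c : Option M} (h : ∀ u, hG.Between a u b → t u = c) : a = b :=
  by_contra fun hab ↦ hd _ _ (hG.adj_next hab)
    ((h a (hG.between_left a b)).trans (h _ (hG.between_next a b)).symm)

end Dating

section Exchange

variable {α β : Type*} {S : α → α → Prop} {f : α → α → α → β}

theorem eq_of_pairwise_of_exchange (hS : ∀ a b, S a b → S b a)
    (hS' : ∀ a b c, S a c → S a b ∨ S b c)
    (hf₁₂ : ∀ a b c, f b a c = f a b c) (hf₂₃ : ∀ a b c, f a c b = f a b c)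
    (hf : ∀ a b c d, S a b → S b c → S a c → S b d → S a d → f a b c = f a b d)
    {x y z x' y' z' : α} (h : S x y ∧ S y z ∧ S x z) (h' : S x' y' ∧ S y' z' ∧ S x' z') :
    f x y z = f x' y' z' := by
  obtain ⟨hxy', hyz', hxz'⟩ := h'
  have two : ∀ p q, S p q → S p x' → S q x' → S p y' → f p q x' = f x' y' z' :=
    fun p q hpq hpx hqx hpy ↦ calc
      f p q x' = f p x' q := (hf₂₃ _ _ _).symm
      _ = f p x' y' := hf _ _ _ _ hpx (hS _ _ hqx) hpq hxy' hpy
      _ = f x' y' p := by rw [← hf₁₂, hf₂₃]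
      _ = f x' y' z' := hf _ _ _ _ hxy' (hS _ _ hpy) (hS _ _ hpx) hyz' hxz'
  have chain : ∀ p q r, S p q → S q r → S p r → S p x' → S q x' → f p q r = f x' y' z' := by
    intro p q r hpq hqr hpr hpx hqx
    rw [hf _ _ _ _ hpq hqr hpr hqx hpx]
    rcases hS' p y' q hpq with hpy | hqy
    · exact two p q hpq hpx hqx hpy
    · rw [← hf₁₂]
      exact two q p (hS _ _ hpq) hqx hpx (hS _ _ hqy)
  obtain ⟨hxy, hyz, hxz⟩ := h
  rcases hS' x x' y hxy with hx | hy
  · rcases hS' y x' z hyz with hy | hz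
    · exact chain x y z hxy hyz hxz hx hy
    · rw [← hf₂₃]
      exact chain x z y hxz (hS _ _ hyz) hxy hx (hS _ _ hz)
  · rcases hS' x x' z hxz with hx | hz
    · exact chain x y z hxy hyz hxz hx (hS _ _ hy)
    · rw [← hf₁₂, ← hf₂₃]
      exact chain y z x hyz (hS _ _ hxz) (hS _ _ hxy) (hS _ _ hy) (hS _ _ hz)

end Exchange

section TwoTrees

variable {V₁ V₂ X M : Type} {G₁ : SimpleGraph V₁} {G₂ : SimpleGraph V₂}
  {leaf₁ : X → V₁} {leaf₂ : X → V₂} {t₁ : V₁ → Option M} {t₂ : V₂ → Option M}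
  {δ : X → X → X → Option M}

theorem transfer_label_eq (h₁ : G₁.IsTree) (h₂ : G₂.IsTree) (hδ₁ : InducedDelta G₁ leaf₁ t₁ δ)
    (hδ₂ : InducedDelta G₂ leaf₂ t₂ δ) {x y z w e : X}
    (hv : h₁.median (leaf₁ x) (leaf₁ y) (leaf₁ z) = h₁.median (leaf₁ x) (leaf₁ y) (leaf₁ w))
    (ha : h₂.Between (leaf₂ x) (h₂.median (leaf₂ x) (leaf₂ y) (leaf₂ w))
      (h₂.median (leaf₂ x) (leaf₂ y) (leaf₂ e)))
    (hb : h₂.Between (leaf₂ x) (h₂.median (leaf₂ x) (leaf₂ y) (leaf₂ e))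
      (h₂.median (leaf₂ x) (leaf₂ y) (leaf₂ z)))
    (ha' : h₂.median (leaf₂ x) (leaf₂ y) (leaf₂ w) ≠ h₂.median (leaf₂ x) (leaf₂ y) (leaf₂ e))
    (hb' : h₂.median (leaf₂ x) (leaf₂ y) (leaf₂ e) ≠ h₂.median (leaf₂ x) (leaf₂ y) (leaf₂ z)) :
    t₂ (h₂.median (leaf₂ x) (leaf₂ y) (leaf₂ e)) =
      t₁ (h₁.median (leaf₁ x) (leaf₁ y) (leaf₁ z)) := by
  rcases eq_or_ne (h₁.median (leaf₁ x) (leaf₁ y) (leaf₁ e))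
    (h₁.median (leaf₁ x) (leaf₁ y) (leaf₁ z)) with hcv | hcv
  · rw [← hδ₂.apply_eq h₂, hδ₁.apply_eq h₁, hcv]
  rcases (h₁.between_median₁₂ (leaf₁ x) (leaf₁ y) (leaf₁ e)).total
    (h₁.between_median₁₂ (leaf₁ x) (leaf₁ y) (leaf₁ z)) with hc | hc
  · -- `e` branches off closer to `x` in the first tree: compare through the triple `y, e, w`
    rw [← median_eq_of_between_medians' ha ha', ← hδ₂.apply_eq h₂, hδ₁.apply_eq h₁,
      median_comm₂₃ (hG := h₁) (leaf₁ y), median_eq_of_between_medians' (hv ▸ hc) (hv ▸ hcv), hv]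
  · -- `e` branches off closer to `y` in the first tree: compare through the triple `x, e, z`
    rw [← median_eq_of_between_medians hb hb', ← hδ₂.apply_eq h₂, hδ₁.apply_eq h₁,
      median_comm₂₃ (hG := h₁) (leaf₁ x), median_eq_of_between_medians hc hcv.symm]

theorem transfer_median_eq_of_between [Fintype V₂] (h₁ : G₁.IsTree) (hT₂ : IsPhyloTree G₂ leaf₂)
    (hd₂ : Discriminating G₂ t₂) (hδ₁ : InducedDelta G₁ leaf₁ t₁ δ)
    (hδ₂ : InducedDelta G₂ leaf₂ t₂ δ) {x y z w : X}
    (hv : h₁.median (leaf₁ x) (leaf₁ y) (leaf₁ z) = h₁.median (leaf₁ x) (leaf₁ y) (leaf₁ w))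
    (hab : hT₂.isTree.Between (leaf₂ x) (hT₂.isTree.median (leaf₂ x) (leaf₂ y) (leaf₂ w))
      (hT₂.isTree.median (leaf₂ x) (leaf₂ y) (leaf₂ z))) :
    hT₂.isTree.median (leaf₂ x) (leaf₂ y) (leaf₂ w) =
      hT₂.isTree.median (leaf₂ x) (leaf₂ y) (leaf₂ z) := by
  set h₂ := hT₂.isTree
  refine hd₂.eq_of_forall_between h₂ (c := t₁ (h₁.median (leaf₁ x) (leaf₁ y) (leaf₁ z)))
    fun u hu ↦ ?_
  rcases eq_or_ne (h₂.median (leaf₂ x) (leaf₂ y) (leaf₂ w)) u with rfl | ha'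
  · rw [← hδ₂.apply_eq h₂, hδ₁.apply_eq h₁, hv]
  rcases eq_or_ne u (h₂.median (leaf₂ x) (leaf₂ y) (leaf₂ z)) with rfl | hb'
  · rw [← hδ₂.apply_eq h₂, hδ₁.apply_eq h₁]
  obtain ⟨e, rfl⟩ := hT₂.exists_median_eq_of_between
    ((h₂.between_median₁₂ (leaf₂ x) (leaf₂ y) (leaf₂ z)).trans_left (hab.trans_right hu))
  exact transfer_label_eq h₁ h₂ hδ₁ hδ₂ hv (hab.trans_right_left hu) (hab.trans_right hu) ha' hb'

theorem transfer_median_eq_of_eq [Fintype V₂] (h₁ : G₁.IsTree) (hT₂ : IsPhyloTree G₂ leaf₂)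
    (hd₂ : Discriminating G₂ t₂) (hδ₁ : InducedDelta G₁ leaf₁ t₁ δ)
    (hδ₂ : InducedDelta G₂ leaf₂ t₂ δ) {x y z w : X}
    (h : h₁.median (leaf₁ x) (leaf₁ y) (leaf₁ z) = h₁.median (leaf₁ x) (leaf₁ y) (leaf₁ w)) :
    hT₂.isTree.median (leaf₂ x) (leaf₂ y) (leaf₂ z) =
      hT₂.isTree.median (leaf₂ x) (leaf₂ y) (leaf₂ w) := by
  rcases (hT₂.isTree.between_median₁₂ _ _ (leaf₂ w)).total
    (hT₂.isTree.between_median₁₂ _ _ (leaf₂ z)) with hab | hba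
  · exact (transfer_median_eq_of_between h₁ hT₂ hd₂ hδ₁ hδ₂ h hab).symm
  · exact transfer_median_eq_of_between h₁ hT₂ hd₂ hδ₁ hδ₂ h.symm hba

theorem transfer_median_eq [Fintype V₂] (h₁ : G₁.IsTree) (hT₂ : IsPhyloTree G₂ leaf₂)
    (hd₂ : Discriminating G₂ t₂) (hδ₁ : InducedDelta G₁ leaf₁ t₁ δ)
    (hδ₂ : InducedDelta G₂ leaf₂ t₂ δ) {x y z x' y' z' : X}
    (h : h₁.median (leaf₁ x) (leaf₁ y) (leaf₁ z) = h₁.median (leaf₁ x') (leaf₁ y') (leaf₁ z')) :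
    hT₂.isTree.median (leaf₂ x) (leaf₂ y) (leaf₂ z) =
      hT₂.isTree.median (leaf₂ x') (leaf₂ y') (leaf₂ z') := by
  set v := h₁.median (leaf₁ x) (leaf₁ y) (leaf₁ z)
  refine eq_of_pairwise_of_exchange (S := fun a b ↦ h₁.Between (leaf₁ a) v (leaf₁ b))
    (f := fun a b c ↦ hT₂.isTree.median (leaf₂ a) (leaf₂ b) (leaf₂ c))
    (fun _ _ ↦ Between.symm) (fun _ b _ h ↦ h.between_or_between (leaf₁ b))
    (fun _ _ _ ↦ median_comm₁₂ _ _ _) (fun _ _ _ ↦ median_comm₂₃ _ _ _)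
    (fun a b c d hab hbc hac hbd had ↦ transfer_median_eq_of_eq h₁ hT₂ hd₂ hδ₁ hδ₂
      ((median_eq hab hbc hac).trans (median_eq hab hbd had).symm))
    (h₁.median_spec _ _ _) (h ▸ h₁.median_spec _ _ _)

end TwoTrees

section Fibres

variable {α β γ : Type*} {f : α → β} {g : α → γ}

noncomputable def equivOfFibresEq (hf : Surjective f) (hg : Surjective g)
    (h : ∀ a b, f a = f b ↔ g a = g b) : β ≃ γ where
  toFun b := g (surjInv hf b)
  invFun c := f (surjInv hg c)
  left_inv b := by
    simp only
    rw [(h _ _).2 (surjInv_eq hg _), surjInv_eq hf]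
  right_inv c := by
    simp only
    rw [(h _ _).1 (surjInv_eq hf _), surjInv_eq hg]

theorem equivOfFibresEq_apply (hf : Surjective f) (hg : Surjective g)
    (h : ∀ a b, f a = f b ↔ g a = g b) (a : α) : equivOfFibresEq hf hg h (f a) = g a :=
  (h _ _).1 (surjInv_eq hf _)

end Fibres

theorem adj_iff_of_between_leaves_iff {V₁ V₂ X : Type} [Fintype V₁] [Fintype V₂]
    {G₁ : SimpleGraph V₁} {G₂ : SimpleGraph V₂} {leaf₁ : X → V₁} {leaf₂ : X → V₂}
    (hT₁ : IsPhyloTree G₁ leaf₁) (hT₂ : IsPhyloTree G₂ leaf₂) (φ : V₁ ≃ V₂)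
    (h : ∀ p q w, hT₁.isTree.Between (leaf₁ p) w (leaf₁ q) ↔
      hT₂.isTree.Between (leaf₂ p) (φ w) (leaf₂ q)) {u v : V₁} :
    G₂.Adj (φ u) (φ v) ↔ G₁.Adj u v := by
  have hB : ∀ w, hT₂.isTree.Between (φ u) (φ w) (φ v) ↔ hT₁.isTree.Between u w v := fun w ↦ by
    rw [hT₁.between_iff_forall_leaves, hT₂.between_iff_forall_leaves]
    simp only [h]
  rw [adj_iff_between (hG := hT₁.isTree), adj_iff_between (hG := hT₂.isTree),
    φ.surjective.forall]
  simp only [hB, φ.injective.ne_iff, φ.injective.eq_iff]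

theorem dated_tree_unique_up_to_iso_general
    {V₁ V₂ X M : Type} [Fintype V₁] [Fintype V₂] [Fintype X]
    (hX : 3 ≤ Fintype.card X)
    (G₁ : SimpleGraph V₁) (G₂ : SimpleGraph V₂) (leaf₁ : X → V₁) (leaf₂ : X → V₂)
    (t₁ : V₁ → Option M) (t₂ : V₂ → Option M)
    (hT₁ : IsPhyloTree G₁ leaf₁) (hd₁ : Discriminating G₁ t₁)
    (hT₂ : IsPhyloTree G₂ leaf₂) (hd₂ : Discriminating G₂ t₂)
    (δ : X → X → X → Option M)
    (hδ₁ : InducedDelta G₁ leaf₁ t₁ δ) (hδ₂ : InducedDelta G₂ leaf₂ t₂ δ) :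
    ∃ φ : G₁ ≃g G₂, (∀ x : X, φ (leaf₁ x) = leaf₂ x) ∧ ∀ v : V₁, t₂ (φ v) = t₁ v := by
  have : Nonempty X := Fintype.card_pos_iff.1 (by omega)
  let μ₁ : X × X × X → V₁ := fun a ↦ hT₁.isTree.median (leaf₁ a.1) (leaf₁ a.2.1) (leaf₁ a.2.2)
  let μ₂ : X × X × X → V₂ := fun a ↦ hT₂.isTree.median (leaf₂ a.1) (leaf₂ a.2.1) (leaf₂ a.2.2)
  have hsurj₁ : Surjective μ₁ := fun v ↦
    let ⟨x, y, z, h⟩ := hT₁.exists_median_eq v; ⟨(x, y, z), h⟩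
  have hsurj₂ : Surjective μ₂ := fun v ↦
    let ⟨x, y, z, h⟩ := hT₂.exists_median_eq v; ⟨(x, y, z), h⟩
  have hfib : ∀ a b, μ₁ a = μ₁ b ↔ μ₂ a = μ₂ b := fun _ _ ↦
    ⟨transfer_median_eq hT₁.isTree hT₂ hd₂ hδ₁ hδ₂, transfer_median_eq hT₂.isTree hT₁ hd₁ hδ₂ hδ₁⟩
  let φ := equivOfFibresEq hsurj₁ hsurj₂ hfib
  have hφ : ∀ a, φ (μ₁ a) = μ₂ a := equivOfFibresEq_apply hsurj₁ hsurj₂ hfib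
  have hbetween : ∀ p q w, hT₁.isTree.Between (leaf₁ p) w (leaf₁ q) ↔
      hT₂.isTree.Between (leaf₂ p) (φ w) (leaf₂ q) := fun p q w ↦ by
    simp only [hT₁.between_leaves_iff, hT₂.between_leaves_iff, ← φ.injective.eq_iff (b := w)]
    exact exists_congr fun c ↦ by rw [hφ (p, q, c)]
  refine ⟨⟨φ, adj_iff_of_between_leaves_iff hT₁ hT₂ φ hbetween⟩, fun x ↦ ?_, fun v ↦ ?_⟩
  · exact between_self_iff.1 ((hbetween x x _).1 (hT₁.isTree.between_left _ _))
  · obtain ⟨a, rfl⟩ := hsurj₁ v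
    exact (congrArg t₂ (hφ a)).trans ((hδ₂.apply_eq _ _ _ _).symm.trans (hδ₁.apply_eq _ _ _ _))

/-- Two discriminating symbolically dated phylogenetic trees inducing
the same ternary map are isomorphic by a graph isomorphism fixing `X` and
compatible with the dating maps. -/
theorem dated_tree_unique_up_to_iso
    {V₁ V₂ X M : Type} [Fintype V₁] [Fintype V₂] [Fintype X] [DecidableEq X]
    [Fintype M] [Nonempty M] (hX : 3 ≤ Fintype.card X)
    (G₁ : SimpleGraph V₁) (G₂ : SimpleGraph V₂) (leaf₁ : X → V₁) (leaf₂ : X → V₂)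
    (t₁ : V₁ → Option M) (t₂ : V₂ → Option M)
    (hT₁ : IsPhyloTree G₁ leaf₁) (ht₁ : IsDatingMap leaf₁ t₁)
    (hd₁ : Discriminating G₁ t₁)
    (hT₂ : IsPhyloTree G₂ leaf₂) (ht₂ : IsDatingMap leaf₂ t₂)
    (hd₂ : Discriminating G₂ t₂)
    (δ : X → X → X → Option M)
    (hδ₁ : InducedDelta G₁ leaf₁ t₁ δ) (hδ₂ : InducedDelta G₂ leaf₂ t₂ δ) :
    ∃ φ : G₁ ≃g G₂, (∀ x : X, φ (leaf₁ x) = leaf₂ x) ∧ ∀ v : V₁, t₂ (φ v) = t₁ v :=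
  dated_tree_unique_up_to_iso_general hX G₁ G₂ leaf₁ leaf₂ t₁ t₂ hT₁ hd₁ hT₂ hd₂ δ hδ₁ hδ₂

end PhyloPaper
end

section
/- Let δ be a symbolic ternary metric on X and let x,y,z,u ∈ X be four distinct taxa with |{δ(x,y,z), δ(x,y,u), δ(x,z,u), δ(y,z,u)}| = 1. Let e, e' ∈ X \ {x,y,z,u} be such that both {x,y,z,u,e} and {x,y,z,u,e'} are 4-6 partitioned by δ, and suppose δ(x,y,e) = δ(x,y,z) = δ(x,y,u) = δ(x,z,u) = δ(z,u,e) = δ(y,z,u) ≠ δ(x,u,e) = δ(x,z,e) = δ(y,z,e) = δ(y,u,e). Then also δ(x,y,e') = δ(x,y,z) = δ(x,y,u) = δ(x,z,u) = δ(z,u,e') = δ(y,z,u) ≠ δ(x,u,e') = δ(x,z,e') = δ(y,z,e') = δ(y,u,e'). -/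
namespace PhyloPaper

variable {V X M : Type}

set_option linter.unusedSectionVars false
set_option linter.unusedVariables false

section Helpers
variable [DecidableEq X] {δ : X → X → X → Option M}

lemma s_swap12 (h : Symm3 δ) (a b c : X) : δ a b c = δ b a c := (h a b c).1
lemma s_swap23 (h : Symm3 δ) (a b c : X) : δ a b c = δ a c b := (h a b c).2.1
lemma s_swap13 (h : Symm3 δ) (a b c : X) : δ a b c = δ c b a := (h a b c).2.2
lemma s_rot (h : Symm3 δ) (a b c : X) : δ a b c = δ b c a :=
  (s_swap12 h a b c).trans (s_swap23 h b a c)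
lemma s_rot2 (h : Symm3 δ) (a b c : X) : δ a b c = δ c a b :=
  (s_swap23 h a b c).trans (s_swap12 h a c b)

lemma delta_congr (h : Symm3 δ) {p q r p' q' r' : X} (h1 : p' ≠ q') (h2 : p' ≠ r')
    (h3 : q' ≠ r') (heq : ({p, q, r} : Finset X) = {p', q', r'}) :
    δ p q r = δ p' q' r' := by
  have hp : p' = p ∨ p' = q ∨ p' = r := by
    have : p' ∈ ({p, q, r} : Finset X) := by rw [heq]; simp
    simpa using this
  have hq : q' = p ∨ q' = q ∨ q' = r := by
    have : q' ∈ ({p, q, r} : Finset X) := by rw [heq]; simp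
    simpa using this
  have hr : r' = p ∨ r' = q ∨ r' = r := by
    have : r' ∈ ({p, q, r} : Finset X) := by rw [heq]; simp
    simpa using this
  rcases hp with rfl | rfl | rfl <;> rcases hq with rfl | rfl | rfl <;>
    rcases hr with rfl | rfl | rfl <;>
    first
      | exact absurd rfl h1
      | exact absurd rfl h2
      | exact absurd rfl h3
      | rfl
      | exact s_swap12 h _ _ _
      | exact s_swap23 h _ _ _
      | exact s_swap13 h _ _ _
      | exact s_rot h _ _ _
      | exact s_rot2 h _ _ _

lemma valOn_canon (hsym : Symm3 δ) {T : Finset X} {w : Option M} (hv : ValOn δ T w)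
    {p q r : X} (hT : T = {p, q, r}) (h1 : p ≠ q) (h2 : p ≠ r) (h3 : q ≠ r) :
    δ p q r = w := by
  obtain ⟨x', y', z', hxy, hxz, hyz, hTe, hval⟩ := hv
  exact (delta_congr hsym hxy hxz hyz (hT.symm.trans hTe)).trans hval

lemma valOn_intro {p q r : X} {w : Option M} (h : δ p q r = w) (h1 : p ≠ q) (h2 : p ≠ r)
    (h3 : q ≠ r) : ValOn δ ({p, q, r} : Finset X) w :=
  ⟨p, q, r, h1, h2, h3, rfl, h⟩

lemma fcard3 {p q r : X} (h1 : p ≠ q) (h2 : p ≠ r) (h3 : q ≠ r) :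
    ({p, q, r} : Finset X).card = 3 := by
  rw [Finset.card_insert_of_notMem (by simp [h1, h2]), Finset.card_pair h3]

lemma fcard5 {p q r s w : X} (hpq : p ≠ q) (hpr : p ≠ r) (hps : p ≠ s) (hpw : p ≠ w)
    (hqr : q ≠ r) (hqs : q ≠ s) (hqw : q ≠ w) (hrs : r ≠ s) (hrw : r ≠ w) (hsw : s ≠ w) :
    ({p, q, r, s, w} : Finset X).card = 5 := by
  rw [Finset.card_insert_of_notMem (by simp [hpq, hpr, hps, hpw]),
    Finset.card_insert_of_notMem (by simp [hqr, hqs, hqw]),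
    Finset.card_insert_of_notMem (by simp [hrs, hrw]), Finset.card_pair hsw]

lemma triple_ne {a b c d ef f : X} (x : X) (h1 : x = a ∨ x = b ∨ x = c)
    (h2 : x ≠ d) (h3 : x ≠ ef) (h4 : x ≠ f) : ({a, b, c} : Finset X) ≠ {d, ef, f} := by
  intro h
  have hx : x ∈ ({a, b, c} : Finset X) := by rcases h1 with rfl | rfl | rfl <;> simp
  rw [h] at hx
  simp [h2, h3, h4] at hx

lemma sncard3 {α : Type} {a b c : α} (h1 : a ≠ b) (h2 : a ≠ c) (h3 : b ≠ c) :
    ({a, b, c} : Set α).ncard = 3 := by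
  rw [Set.ncard_insert_of_notMem (by simp [h1, h2])
      ((Set.finite_singleton c).insert b),
    Set.ncard_insert_of_notMem (by simp [h3]) (Set.finite_singleton c),
    Set.ncard_singleton]

lemma sncard5 {α : Type} {a b c d e : α} (h1 : a≠b) (h2 : a≠c) (h3 : a≠d) (h4 : a≠e)
    (h5 : b≠c) (h6 : b≠d) (h7 : b≠e) (h8 : c≠d) (h9 : c≠e) (h10 : d≠e) :
    ({a, b, c, d, e} : Set α).ncard = 5 := by
  have f2 : ({e} : Set α).Finite := Set.finite_singleton e
  have f3 := f2.insert d
  have f4 := f3.insert c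
  have f5 := f4.insert b
  rw [Set.ncard_insert_of_notMem (by simp [h1, h2, h3, h4]) f5,
    Set.ncard_insert_of_notMem (by simp [h5, h6, h7]) f4,
    Set.ncard_insert_of_notMem (by simp [h8, h9]) f3,
    Set.ncard_insert_of_notMem (by simp [h10]) f2, Set.ncard_singleton]

lemma sncard_le3 {α : Type} (a b c : α) : ({a, b, c} : Set α).ncard ≤ 3 := by
  have h1 := Set.ncard_insert_le a ({b, c} : Set α)
  have h2 := Set.ncard_insert_le b ({c} : Set α)
  simp only [Set.ncard_singleton] at h2 ⊢
  omega

lemma mem_p3_five {v1 v2 v3 v4 v5 : X}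
    (h12 : v1≠v2) (h13 : v1≠v3) (h14 : v1≠v4) (h15 : v1≠v5) (h23 : v2≠v3)
    (h24 : v2≠v4) (h25 : v2≠v5) (h34 : v3≠v4) (h35 : v3≠v5) (h45 : v4≠v5)
    {T : Finset X} (hsub : T ⊆ {v1, v2, v3, v4, v5}) (hcard : T.card = 3) :
    T = {v1,v2,v3} ∨ T = {v1,v2,v4} ∨ T = {v1,v2,v5} ∨ T = {v1,v3,v4} ∨ T = {v1,v3,v5} ∨
    T = {v1,v4,v5} ∨ T = {v2,v3,v4} ∨ T = {v2,v3,v5} ∨ T = {v2,v4,v5} ∨ T = {v3,v4,v5} := by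
  have key : Finset.filter (· ∈ T) ({v1, v2, v3, v4, v5} : Finset X) = T := by
    ext t
    simp only [Finset.mem_filter]
    exact ⟨fun h => h.2, fun h => ⟨hsub h, h⟩⟩
  by_cases h1 : v1 ∈ T <;> by_cases h2 : v2 ∈ T <;> by_cases h3 : v3 ∈ T <;>
    by_cases h4 : v4 ∈ T <;> by_cases h5 : v5 ∈ T <;>
    simp only [Finset.filter_insert, Finset.filter_singleton, h1, h2, h3, h4, h5,
      if_true, if_false, Finset.insert_empty] at key <;>
    subst key <;>
    first
      | exact Or.inl rfl
      | exact Or.inr (Or.inl rfl)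
      | exact Or.inr (Or.inr (Or.inl rfl))
      | exact Or.inr (Or.inr (Or.inr (Or.inl rfl)))
      | exact Or.inr (Or.inr (Or.inr (Or.inr (Or.inl rfl))))
      | exact Or.inr (Or.inr (Or.inr (Or.inr (Or.inr (Or.inl rfl)))))
      | exact Or.inr (Or.inr (Or.inr (Or.inr (Or.inr (Or.inr (Or.inl rfl))))))
      | exact Or.inr (Or.inr (Or.inr (Or.inr (Or.inr (Or.inr (Or.inr (Or.inl rfl)))))))
      | exact Or.inr (Or.inr (Or.inr (Or.inr (Or.inr (Or.inr (Or.inr (Or.inr (Or.inl rfl))))))))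
      | exact Or.inr (Or.inr (Or.inr (Or.inr (Or.inr (Or.inr (Or.inr (Or.inr (Or.inr rfl))))))))
      | exact absurd hcard (by simp [Finset.card_insert_of_notMem,
          h12, h13, h14, h15, h23, h24, h25, h34, h35, h45])

lemma mem_p3_four {v1 v2 v3 v4 : X}
    (h12 : v1≠v2) (h13 : v1≠v3) (h14 : v1≠v4) (h23 : v2≠v3) (h24 : v2≠v4) (h34 : v3≠v4)
    {T : Finset X} (hsub : T ⊆ {v1, v2, v3, v4}) (hcard : T.card = 3) :
    T = {v1,v2,v3} ∨ T = {v1,v2,v4} ∨ T = {v1,v3,v4} ∨ T = {v2,v3,v4} := by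
  have key : Finset.filter (· ∈ T) ({v1, v2, v3, v4} : Finset X) = T := by
    ext t
    simp only [Finset.mem_filter]
    exact ⟨fun h => h.2, fun h => ⟨hsub h, h⟩⟩
  by_cases h1 : v1 ∈ T <;> by_cases h2 : v2 ∈ T <;> by_cases h3 : v3 ∈ T <;>
    by_cases h4 : v4 ∈ T <;>
    simp only [Finset.filter_insert, Finset.filter_singleton, h1, h2, h3, h4,
      if_true, if_false, Finset.insert_empty] at key <;>
    subst key <;>
    first
      | exact Or.inl rfl
      | exact Or.inr (Or.inl rfl)
      | exact Or.inr (Or.inr (Or.inl rfl))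
      | exact Or.inr (Or.inr (Or.inr rfl))
      | exact absurd hcard (by simp [Finset.card_insert_of_notMem,
          h12, h13, h14, h23, h24, h34])

lemma no_three_one (hsym : Symm3 δ) (h4pt : FourPointCond δ) {p q r s : X}
    (hp4 : P4 p q r s) {c d : Option M}
    (e1 : δ p q r = c) (e2 : δ p q s = c) (e3 : δ p r s = c) (e4 : δ q r s = d)
    (hcd : c ≠ d) : False := by
  obtain ⟨hpq, hpr, hps, hqr, hqs, hrs⟩ := hp4
  have hn : ({δ p q r, δ p q s, δ p r s, δ q r s} : Set (Option M)).ncard = 2 := by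
    rw [e1, e2, e3, e4]
    simp only [Set.insert_idem, Set.insert_comm]
    exact Set.ncard_pair hcd
  obtain ⟨A, B, hAB, hcA, hcB, hcov⟩ :=
    (h4pt p q r s ⟨hpq, hpr, hps, hqr, hqs, hrs⟩).2 hn
  have hreal : ∀ (T : Finset X) (v : Option M),
      T ∈ ({p, q, r, s} : Finset X).powersetCard 3 → ValOn δ T v → v = c ∨ v = d := by
    intro T v hT hval
    rw [Finset.mem_powersetCard] at hT
    rcases mem_p3_four hpq hpr hps hqr hqs hrs hT.1 hT.2 with rfl | rfl | rfl | rfl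
    · exact Or.inl ((valOn_canon hsym hval rfl hpq hpr hqr).symm.trans e1)
    · exact Or.inl ((valOn_canon hsym hval rfl hpq hps hqs).symm.trans e2)
    · exact Or.inl ((valOn_canon hsym hval rfl hpr hps hrs).symm.trans e3)
    · exact Or.inr ((valOn_canon hsym hval rfl hqr hqs hrs).symm.trans e4)
  have hcc : {T : Finset X | T ∈ ({p, q, r, s} : Finset X).powersetCard 3 ∧ ValOn δ T c} =
      {({p,q,r} : Finset X), {p,q,s}, {p,r,s}} := by
    ext T
    constructor
    · rintro ⟨hT, hval⟩
      rw [Finset.mem_powersetCard] at hT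
      rcases mem_p3_four hpq hpr hps hqr hqs hrs hT.1 hT.2 with rfl | rfl | rfl | rfl
      · simp
      · simp
      · simp
      · exact absurd (e4.symm.trans (valOn_canon hsym hval rfl hqr hqs hrs)) hcd.symm
    · intro hT
      simp only [Set.mem_insert_iff, Set.mem_singleton_iff] at hT
      rcases hT with rfl | rfl | rfl
      · exact ⟨Finset.mem_powersetCard.mpr ⟨by intro t ht; simp at ht ⊢; tauto,
          fcard3 hpq hpr hqr⟩, valOn_intro e1 hpq hpr hqr⟩
      · exact ⟨Finset.mem_powersetCard.mpr ⟨by intro t ht; simp at ht ⊢; tauto,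
          fcard3 hpq hps hqs⟩, valOn_intro e2 hpq hps hqs⟩
      · exact ⟨Finset.mem_powersetCard.mpr ⟨by intro t ht; simp at ht ⊢; tauto,
          fcard3 hpr hps hrs⟩, valOn_intro e3 hpr hps hrs⟩
  have hnc : ({({p,q,r} : Finset X), {p,q,s}, {p,r,s}} : Set (Finset X)).ncard = 3 :=
    sncard3 (triple_ne r (by tauto) hpr.symm hqr.symm hrs)
      (triple_ne q (by tauto) hpq.symm hqr hqs)
      (triple_ne q (by tauto) hpq.symm hqr hqs)
  have hA' : A = c ∨ A = d := by
    obtain ⟨T, hT1, hT2⟩ := Set.nonempty_of_ncard_ne_zero (s := {T : Finset X |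
      T ∈ ({p, q, r, s} : Finset X).powersetCard 3 ∧ ValOn δ T A}) (by rw [hcA]; omega)
    exact hreal T A hT1 hT2
  have hB' : B = c ∨ B = d := by
    obtain ⟨T, hT1, hT2⟩ := Set.nonempty_of_ncard_ne_zero (s := {T : Finset X |
      T ∈ ({p, q, r, s} : Finset X).powersetCard 3 ∧ ValOn δ T B}) (by rw [hcB]; omega)
    exact hreal T B hT1 hT2
  have hc3 : ¬ ({T : Finset X | T ∈ ({p, q, r, s} : Finset X).powersetCard 3 ∧
      ValOn δ T c}.ncard = 2) := by rw [hcc, hnc]; omega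
  rcases hA' with rfl | rfl
  · exact hc3 hcA
  · rcases hB' with rfl | rfl
    · exact hc3 hcB
    · exact hAB rfl

lemma four_pattern_aux {v1 v2 v3 v4 : Option M}
    (hno31 : ¬(v1 = v2 ∧ v1 = v3 ∧ v1 ≠ v4))
    (hno32 : ¬(v1 = v2 ∧ v1 = v4 ∧ v1 ≠ v3))
    (hno33 : ¬(v1 = v3 ∧ v1 = v4 ∧ v1 ≠ v2))
    (hno34 : ¬(v2 = v3 ∧ v2 = v4 ∧ v2 ≠ v1))
    (hnd1 : ¬(v1 ≠ v2 ∧ v1 ≠ v3 ∧ v2 ≠ v3))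
    (hnd2 : ¬(v1 ≠ v2 ∧ v1 ≠ v4 ∧ v2 ≠ v4))
    (hnd3 : ¬(v1 ≠ v3 ∧ v1 ≠ v4 ∧ v3 ≠ v4)) :
    (v1 = v2 ∧ v1 = v3 ∧ v1 = v4) ∨ (v1 = v2 ∧ v3 = v4 ∧ v1 ≠ v3) ∨
    (v1 = v3 ∧ v2 = v4 ∧ v1 ≠ v2) ∨ (v1 = v4 ∧ v2 = v3 ∧ v1 ≠ v2) := by
  by_cases h12 : v1 = v2
  · by_cases h13 : v1 = v3
    · have h14 : v1 = v4 := by by_contra h; exact hno31 ⟨h12, h13, h⟩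
      exact Or.inl ⟨h12, h13, h14⟩
    · have h34 : v3 = v4 := by
        by_contra h34
        by_cases h14 : v1 = v4
        · exact hno32 ⟨h12, h14, h13⟩
        · exact hnd3 ⟨h13, h14, h34⟩
      exact Or.inr (Or.inl ⟨h12, h34, h13⟩)
  · by_cases h13 : v1 = v3
    · have h24 : v2 = v4 := by
        by_contra h24
        by_cases h14 : v1 = v4
        · exact hno33 ⟨h13, h14, h12⟩
        · exact hnd2 ⟨h12, h14, h24⟩
      exact Or.inr (Or.inr (Or.inl ⟨h13, h24, h12⟩))
    · have h23 : v2 = v3 := by by_contra h; exact hnd1 ⟨h12, h13, h⟩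
      have h14 : v1 = v4 := by
        by_contra h14
        by_cases h24 : v2 = v4
        · exact hno34 ⟨h23, h24, fun h => h12 h.symm⟩
        · exact hnd2 ⟨h12, h14, h24⟩
      exact Or.inr (Or.inr (Or.inr ⟨h14, h23, h12⟩))

lemma quad_pattern (hsym : Symm3 δ) (h4pt : FourPointCond δ) {p q r s : X}
    (hp4 : P4 p q r s) :
    (δ p q r = δ p q s ∧ δ p q r = δ p r s ∧ δ p q r = δ q r s) ∨
    (δ p q r = δ p q s ∧ δ p r s = δ q r s ∧ δ p q r ≠ δ p r s) ∨
    (δ p q r = δ p r s ∧ δ p q s = δ q r s ∧ δ p q r ≠ δ p q s) ∨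
    (δ p q r = δ q r s ∧ δ p q s = δ p r s ∧ δ p q r ≠ δ p q s) := by
  obtain ⟨hpq, hpr, hps, hqr, hqs, hrs⟩ := hp4
  have hle := (h4pt p q r s ⟨hpq, hpr, hps, hqr, hqs, hrs⟩).1
  have hfin : ({δ p q r, δ p q s, δ p r s, δ q r s} : Set (Option M)).Finite :=
    (((Set.finite_singleton _).insert _).insert _).insert _
  have key : ∀ w1 w2 w3 : Option M,
      w1 ∈ ({δ p q r, δ p q s, δ p r s, δ q r s} : Set (Option M)) →
      w2 ∈ ({δ p q r, δ p q s, δ p r s, δ q r s} : Set (Option M)) →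
      w3 ∈ ({δ p q r, δ p q s, δ p r s, δ q r s} : Set (Option M)) →
      w1 ≠ w2 → w1 ≠ w3 → w2 ≠ w3 → False := by
    intro w1 w2 w3 hw1 hw2 hw3 hd1 hd2 hd3
    have hsub : ({w1, w2, w3} : Set (Option M)) ⊆ {δ p q r, δ p q s, δ p r s, δ q r s} := by
      intro t ht
      rcases ht with rfl | rfl | rfl
      exacts [hw1, hw2, hw3]
    have : (3 : ℕ) ≤ 2 := by
      calc (3 : ℕ) = ({w1, w2, w3} : Set (Option M)).ncard := (sncard3 hd1 hd2 hd3).symm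
        _ ≤ _ := Set.ncard_le_ncard hsub hfin
        _ ≤ 2 := hle
    omega
  apply four_pattern_aux
  · rintro ⟨a1, a2, a3⟩
    exact no_three_one hsym h4pt ⟨hpq, hpr, hps, hqr, hqs, hrs⟩ rfl a1.symm a2.symm rfl a3
  · rintro ⟨a1, a2, a3⟩
    exact no_three_one hsym h4pt ⟨hpq.symm, hqr, hqs, hpr, hps, hrs⟩
      (s_swap12 hsym q p r) ((s_swap12 hsym q p s).trans a1.symm) (a2.symm) rfl a3
  · rintro ⟨a1, a2, a3⟩
    exact no_three_one hsym h4pt ⟨hpr.symm, hqr.symm, hrs, hpq, hps, hqs⟩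
      ((s_rot2 hsym p q r).symm) ((s_swap12 hsym r p s).trans a1.symm)
      ((s_swap12 hsym r q s).trans a2.symm) rfl a3
  · rintro ⟨a1, a2, a3⟩
    exact no_three_one hsym h4pt ⟨hps.symm, hqs.symm, hrs.symm, hpq, hpr, hqr⟩
      ((s_rot2 hsym p q s).symm) (((s_rot2 hsym p r s).symm).trans a1.symm)
      (((s_rot2 hsym q r s).symm).trans a2.symm) rfl a3
  · rintro ⟨a1, a2, a3⟩
    exact key _ _ _ (by simp) (by simp) (by simp) a1 a2 a3
  · rintro ⟨a1, a2, a3⟩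
    exact key _ _ _ (by simp) (by simp) (by simp) a1 a2 a3
  · rintro ⟨a1, a2, a3⟩
    exact key _ _ _ (by simp) (by simp) (by simp) a1 a2 a3
lemma full_count (hsym : Symm3 δ) {p q r s w : X}
    (hpq : p≠q) (hpr : p≠r) (hps : p≠s) (hpw : p≠w) (hqr : q≠r) (hqs : q≠s)
    (hqw : q≠w) (hrs : r≠s) (hrw : r≠w) (hsw : s≠w) {a : Option M}
    (i1 : δ p q r = a) (i2 : δ p q s = a) (i3 : δ p r s = a) (i4 : δ q r s = a)
    (e1 : δ p q w = a) (e2 : δ p r w = a) (e3 : δ q r w = a)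
    (f1 : δ p s w = a) (f2 : δ q s w = a) (f3 : δ r s w = a)
    (hp : Partitioned δ ({p, q, r, s, w} : Finset X) 4 6) : False := by
  obtain ⟨A, B, hAB, hcA, hcB, hcov⟩ := hp
  have hreal : ∀ (T : Finset X) (v : Option M),
      T ∈ ({p, q, r, s, w} : Finset X).powersetCard 3 → ValOn δ T v → v = a := by
    intro T v hT hval
    rw [Finset.mem_powersetCard] at hT
    rcases mem_p3_five hpq hpr hps hpw hqr hqs hqw hrs hrw hsw hT.1 hT.2 with
      rfl | rfl | rfl | rfl | rfl | rfl | rfl | rfl | rfl | rfl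
    · exact (valOn_canon hsym hval rfl hpq hpr hqr).symm.trans i1
    · exact (valOn_canon hsym hval rfl hpq hps hqs).symm.trans i2
    · exact (valOn_canon hsym hval rfl hpq hpw hqw).symm.trans e1
    · exact (valOn_canon hsym hval rfl hpr hps hrs).symm.trans i3
    · exact (valOn_canon hsym hval rfl hpr hpw hrw).symm.trans e2
    · exact (valOn_canon hsym hval rfl hps hpw hsw).symm.trans f1
    · exact (valOn_canon hsym hval rfl hqr hqs hrs).symm.trans i4
    · exact (valOn_canon hsym hval rfl hqr hqw hrw).symm.trans e3
    · exact (valOn_canon hsym hval rfl hqs hqw hsw).symm.trans f2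
    · exact (valOn_canon hsym hval rfl hrs hrw hsw).symm.trans f3
  have hA' : A = a := by
    obtain ⟨T, hT1, hT2⟩ := Set.nonempty_of_ncard_ne_zero (s := {T : Finset X |
      T ∈ ({p, q, r, s, w} : Finset X).powersetCard 3 ∧ ValOn δ T A}) (by rw [hcA]; omega)
    exact hreal T A hT1 hT2
  have hB' : B = a := by
    obtain ⟨T, hT1, hT2⟩ := Set.nonempty_of_ncard_ne_zero (s := {T : Finset X |
      T ∈ ({p, q, r, s, w} : Finset X).powersetCard 3 ∧ ValOn δ T B}) (by rw [hcB]; omega)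
    exact hreal T B hT1 hT2
  exact hAB (hA'.trans hB'.symm)

lemma triangle_count (hsym : Symm3 δ) {p q r s w : X}
    (hpq : p≠q) (hpr : p≠r) (hps : p≠s) (hpw : p≠w) (hqr : q≠r) (hqs : q≠s)
    (hqw : q≠w) (hrs : r≠s) (hrw : r≠w) (hsw : s≠w) {a c : Option M} (hac : a ≠ c)
    (i1 : δ p q r = a) (i2 : δ p q s = a) (i3 : δ p r s = a) (i4 : δ q r s = a)
    (e1 : δ p q w = a) (e2 : δ p r w = a) (e3 : δ q r w = a)
    (f1 : δ p s w = c) (f2 : δ q s w = c) (f3 : δ r s w = c)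
    (hp : Partitioned δ ({p, q, r, s, w} : Finset X) 4 6) : False := by
  obtain ⟨A, B, hAB, hcA, hcB, hcov⟩ := hp
  have hreal : ∀ (T : Finset X) (v : Option M),
      T ∈ ({p, q, r, s, w} : Finset X).powersetCard 3 → ValOn δ T v → v = a ∨ v = c := by
    intro T v hT hval
    rw [Finset.mem_powersetCard] at hT
    rcases mem_p3_five hpq hpr hps hpw hqr hqs hqw hrs hrw hsw hT.1 hT.2 with
      rfl | rfl | rfl | rfl | rfl | rfl | rfl | rfl | rfl | rfl
    · exact Or.inl ((valOn_canon hsym hval rfl hpq hpr hqr).symm.trans i1)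
    · exact Or.inl ((valOn_canon hsym hval rfl hpq hps hqs).symm.trans i2)
    · exact Or.inl ((valOn_canon hsym hval rfl hpq hpw hqw).symm.trans e1)
    · exact Or.inl ((valOn_canon hsym hval rfl hpr hps hrs).symm.trans i3)
    · exact Or.inl ((valOn_canon hsym hval rfl hpr hpw hrw).symm.trans e2)
    · exact Or.inr ((valOn_canon hsym hval rfl hps hpw hsw).symm.trans f1)
    · exact Or.inl ((valOn_canon hsym hval rfl hqr hqs hrs).symm.trans i4)
    · exact Or.inl ((valOn_canon hsym hval rfl hqr hqw hrw).symm.trans e3)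
    · exact Or.inr ((valOn_canon hsym hval rfl hqs hqw hsw).symm.trans f2)
    · exact Or.inr ((valOn_canon hsym hval rfl hrs hrw hsw).symm.trans f3)
  have hA' : A = a ∨ A = c := by
    obtain ⟨T, hT1, hT2⟩ := Set.nonempty_of_ncard_ne_zero (s := {T : Finset X |
      T ∈ ({p, q, r, s, w} : Finset X).powersetCard 3 ∧ ValOn δ T A}) (by rw [hcA]; omega)
    exact hreal T A hT1 hT2
  have hB' : B = a ∨ B = c := by
    obtain ⟨T, hT1, hT2⟩ := Set.nonempty_of_ncard_ne_zero (s := {T : Finset X |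
      T ∈ ({p, q, r, s, w} : Finset X).powersetCard 3 ∧ ValOn δ T B}) (by rw [hcB]; omega)
    exact hreal T B hT1 hT2
  have hsubc : {T : Finset X | T ∈ ({p, q, r, s, w} : Finset X).powersetCard 3 ∧
      ValOn δ T c} ⊆ ({({p,s,w} : Finset X), {q,s,w}, {r,s,w}} : Set (Finset X)) := by
    rintro T ⟨hT, hval⟩
    rw [Finset.mem_powersetCard] at hT
    rcases mem_p3_five hpq hpr hps hpw hqr hqs hqw hrs hrw hsw hT.1 hT.2 with
      rfl | rfl | rfl | rfl | rfl | rfl | rfl | rfl | rfl | rfl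
    · exact absurd (i1.symm.trans (valOn_canon hsym hval rfl hpq hpr hqr)) hac
    · exact absurd (i2.symm.trans (valOn_canon hsym hval rfl hpq hps hqs)) hac
    · exact absurd (e1.symm.trans (valOn_canon hsym hval rfl hpq hpw hqw)) hac
    · exact absurd (i3.symm.trans (valOn_canon hsym hval rfl hpr hps hrs)) hac
    · exact absurd (e2.symm.trans (valOn_canon hsym hval rfl hpr hpw hrw)) hac
    · simp
    · exact absurd (i4.symm.trans (valOn_canon hsym hval rfl hqr hqs hrs)) hac
    · exact absurd (e3.symm.trans (valOn_canon hsym hval rfl hqr hqw hrw)) hac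
    · simp
    · simp
  have hle3 : {T : Finset X | T ∈ ({p, q, r, s, w} : Finset X).powersetCard 3 ∧
      ValOn δ T c}.ncard ≤ 3 :=
    (Set.ncard_le_ncard hsubc (((Set.finite_singleton _).insert _).insert _)).trans
      (sncard_le3 _ _ _)
  rcases hA' with rfl | rfl
  · rcases hB' with rfl | rfl
    · exact hAB rfl
    · rw [hcB] at hle3; omega
  · rw [hcA] at hle3; omega

lemma five_five_contra (hsym : Symm3 δ) (h5pt : FivePointCond δ) {p q r s w : X}
    (hpq : p≠q) (hpr : p≠r) (hps : p≠s) (hpw : p≠w) (hqr : q≠r) (hqs : q≠s)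
    (hqw : q≠w) (hrs : r≠s) (hrw : r≠w) (hsw : s≠w) {a b : Option M} (hab : a ≠ b)
    (a1 : δ p q r = a) (a2 : δ p q s = a) (a3 : δ p s w = a) (a4 : δ q r w = a)
    (a5 : δ r s w = a)
    (b1 : δ p r s = b) (b2 : δ q r s = b) (b3 : δ p q w = b) (b4 : δ p r w = b)
    (b5 : δ q s w = b) : False := by
  apply h5pt ({p, q, r, s, w} : Finset X)
    (fcard5 hpq hpr hps hpw hqr hqs hqw hrs hrw hsw)
  refine ⟨a, b, hab, ?_, ?_, ?_⟩
  · have hset : {T : Finset X | T ∈ ({p, q, r, s, w} : Finset X).powersetCard 3 ∧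
        ValOn δ T a} =
        ({({p,q,r} : Finset X), {p,q,s}, {p,s,w}, {q,r,w}, {r,s,w}} : Set (Finset X)) := by
      ext T
      constructor
      · rintro ⟨hT, hval⟩
        rw [Finset.mem_powersetCard] at hT
        rcases mem_p3_five hpq hpr hps hpw hqr hqs hqw hrs hrw hsw hT.1 hT.2 with
          rfl | rfl | rfl | rfl | rfl | rfl | rfl | rfl | rfl | rfl
        · simp
        · simp
        · exact absurd ((valOn_canon hsym hval rfl hpq hpw hqw).symm.trans b3) hab
        · exact absurd ((valOn_canon hsym hval rfl hpr hps hrs).symm.trans b1) hab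
        · exact absurd ((valOn_canon hsym hval rfl hpr hpw hrw).symm.trans b4) hab
        · simp
        · exact absurd ((valOn_canon hsym hval rfl hqr hqs hrs).symm.trans b2) hab
        · simp
        · exact absurd ((valOn_canon hsym hval rfl hqs hqw hsw).symm.trans b5) hab
        · simp
      · intro hT
        simp only [Set.mem_insert_iff, Set.mem_singleton_iff] at hT
        rcases hT with rfl | rfl | rfl | rfl | rfl
        · exact ⟨Finset.mem_powersetCard.mpr ⟨by intro t ht; simp at ht ⊢; tauto,
            fcard3 hpq hpr hqr⟩, valOn_intro a1 hpq hpr hqr⟩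
        · exact ⟨Finset.mem_powersetCard.mpr ⟨by intro t ht; simp at ht ⊢; tauto,
            fcard3 hpq hps hqs⟩, valOn_intro a2 hpq hps hqs⟩
        · exact ⟨Finset.mem_powersetCard.mpr ⟨by intro t ht; simp at ht ⊢; tauto,
            fcard3 hps hpw hsw⟩, valOn_intro a3 hps hpw hsw⟩
        · exact ⟨Finset.mem_powersetCard.mpr ⟨by intro t ht; simp at ht ⊢; tauto,
            fcard3 hqr hqw hrw⟩, valOn_intro a4 hqr hqw hrw⟩
        · exact ⟨Finset.mem_powersetCard.mpr ⟨by intro t ht; simp at ht ⊢; tauto,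
            fcard3 hrs hrw hsw⟩, valOn_intro a5 hrs hrw hsw⟩
    rw [hset]
    exact sncard5
      (triple_ne r (by tauto) hpr.symm hqr.symm hrs)
      (triple_ne q (by tauto) hpq.symm hqs hqw)
      (triple_ne p (by tauto) hpq hpr hpw)
      (triple_ne p (by tauto) hpr hps hpw)
      (triple_ne q (by tauto) hpq.symm hqs hqw)
      (triple_ne p (by tauto) hpq hpr hpw)
      (triple_ne p (by tauto) hpr hps hpw)
      (triple_ne s (by tauto) hqs.symm hrs.symm hsw)
      (triple_ne p (by tauto) hpr hps hpw)
      (triple_ne q (by tauto) hqr hqs hqw)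
  · have hset : {T : Finset X | T ∈ ({p, q, r, s, w} : Finset X).powersetCard 3 ∧
        ValOn δ T b} =
        ({({p,r,s} : Finset X), {q,r,s}, {p,q,w}, {p,r,w}, {q,s,w}} : Set (Finset X)) := by
      ext T
      constructor
      · rintro ⟨hT, hval⟩
        rw [Finset.mem_powersetCard] at hT
        rcases mem_p3_five hpq hpr hps hpw hqr hqs hqw hrs hrw hsw hT.1 hT.2 with
          rfl | rfl | rfl | rfl | rfl | rfl | rfl | rfl | rfl | rfl
        · exact absurd ((valOn_canon hsym hval rfl hpq hpr hqr).symm.trans a1) hab.symm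
        · exact absurd ((valOn_canon hsym hval rfl hpq hps hqs).symm.trans a2) hab.symm
        · simp
        · simp
        · simp
        · exact absurd ((valOn_canon hsym hval rfl hps hpw hsw).symm.trans a3) hab.symm
        · simp
        · exact absurd ((valOn_canon hsym hval rfl hqr hqw hrw).symm.trans a4) hab.symm
        · simp
        · exact absurd ((valOn_canon hsym hval rfl hrs hrw hsw).symm.trans a5) hab.symm
      · intro hT
        simp only [Set.mem_insert_iff, Set.mem_singleton_iff] at hT
        rcases hT with rfl | rfl | rfl | rfl | rfl
        · exact ⟨Finset.mem_powersetCard.mpr ⟨by intro t ht; simp at ht ⊢; tauto,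
            fcard3 hpr hps hrs⟩, valOn_intro b1 hpr hps hrs⟩
        · exact ⟨Finset.mem_powersetCard.mpr ⟨by intro t ht; simp at ht ⊢; tauto,
            fcard3 hqr hqs hrs⟩, valOn_intro b2 hqr hqs hrs⟩
        · exact ⟨Finset.mem_powersetCard.mpr ⟨by intro t ht; simp at ht ⊢; tauto,
            fcard3 hpq hpw hqw⟩, valOn_intro b3 hpq hpw hqw⟩
        · exact ⟨Finset.mem_powersetCard.mpr ⟨by intro t ht; simp at ht ⊢; tauto,
            fcard3 hpr hpw hrw⟩, valOn_intro b4 hpr hpw hrw⟩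
        · exact ⟨Finset.mem_powersetCard.mpr ⟨by intro t ht; simp at ht ⊢; tauto,
            fcard3 hqs hqw hsw⟩, valOn_intro b5 hqs hqw hsw⟩
    rw [hset]
    exact sncard5
      (triple_ne p (by tauto) hpq hpr hps)
      (triple_ne r (by tauto) hpr.symm hqr.symm hrw)
      (triple_ne s (by tauto) hps.symm hrs.symm hsw)
      (triple_ne r (by tauto) hqr.symm hrs hrw)
      (triple_ne r (by tauto) hpr.symm hqr.symm hrw)
      (triple_ne s (by tauto) hps.symm hrs.symm hsw)
      (triple_ne r (by tauto) hqr.symm hrs hrw)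
      (triple_ne q (by tauto) hpq.symm hqr hqw)
      (triple_ne p (by tauto) hpq hps hpw)
      (triple_ne p (by tauto) hpq hps hpw)
  · intro T hT
    rw [Finset.mem_powersetCard] at hT
    rcases mem_p3_five hpq hpr hps hpw hqr hqs hqw hrs hrw hsw hT.1 hT.2 with
      rfl | rfl | rfl | rfl | rfl | rfl | rfl | rfl | rfl | rfl
    · exact Or.inl (valOn_intro a1 hpq hpr hqr)
    · exact Or.inl (valOn_intro a2 hpq hps hqs)
    · exact Or.inr (valOn_intro b3 hpq hpw hqw)
    · exact Or.inr (valOn_intro b1 hpr hps hrs)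
    · exact Or.inr (valOn_intro b4 hpr hpw hrw)
    · exact Or.inl (valOn_intro a3 hps hpw hsw)
    · exact Or.inr (valOn_intro b2 hqr hqs hrs)
    · exact Or.inl (valOn_intro a4 hqr hqw hrw)
    · exact Or.inr (valOn_intro b5 hqs hqw hsw)
    · exact Or.inl (valOn_intro a5 hrs hrw hsw)
lemma bad_matching (hsym : Symm3 δ) (h4pt : FourPointCond δ) (h5pt : FivePointCond δ)
    {x y z u e e' : X}
    (hxy : x≠y) (hxz : x≠z) (hxu : x≠u) (hxe : x≠e) (hxe' : x≠e')
    (hyz : y≠z) (hyu : y≠u) (hye : y≠e) (hye' : y≠e')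
    (hzu : z≠u) (hze : z≠e) (hze' : z≠e') (hue : u≠e) (hue' : u≠e') (hee' : e≠e')
    {a b c : Option M}
    (i1 : δ x y z = a) (i2 : δ x y u = a)
    (j1 : δ x y e = a) (j3 : δ x z e = b) (j4 : δ x u e = b) (j5 : δ y z e = b)
    (j6 : δ y u e = b)
    (k1 : δ x z e' = a) (k2 : δ y u e' = a) (k3 : δ x y e' = c) (k4 : δ x u e' = c)
    (k5 : δ y z e' = c)
    (hab : a ≠ b) (hac : a ≠ c) : False := by
  have Q1 := quad_pattern hsym h4pt ⟨hxy, hxe, hxe', hye, hye', hee'⟩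
  rw [j1, k3] at Q1
  by_cases hbc : b = c
  · subst hbc
    rcases Q1 with ⟨h1, -, -⟩ | ⟨h1, -, -⟩ | ⟨h1, h2, -⟩ | ⟨h1, h2, -⟩
    · exact hab h1
    · exact hab h1
    · have Q2 := quad_pattern hsym h4pt ⟨hxu, hxe, hxe', hue, hue', hee'⟩
      rw [j4, k4, ← h1] at Q2
      rcases Q2 with ⟨-, h3, -⟩ | ⟨-, h3, -⟩ | ⟨-, -, h3⟩ | ⟨-, -, h3⟩
      · exact hab h3.symm
      · exact five_five_contra hsym h5pt hxy hxu hxe hxe' hyu hye hye' hue hue' hee'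
          hab i2 j1 h1.symm k2 h3.symm j4 j6 k3 k4 h2.symm
      · exact h3 rfl
      · exact h3 rfl
    · have Q3 := quad_pattern hsym h4pt ⟨hyz, hye, hye', hze, hze', hee'⟩
      rw [j5, k5, ← h1] at Q3
      rcases Q3 with ⟨-, h3, -⟩ | ⟨-, h3, -⟩ | ⟨-, -, h3⟩ | ⟨-, -, h3⟩
      · exact hab h3.symm
      · exact five_five_contra hsym h5pt hxy.symm hyz hye hye' hxz hxe hxe' hze hze' hee'
          hab ((s_swap12 hsym y x z).trans i1) ((s_swap12 hsym y x e).trans j1) h1.symm k1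
          h3.symm j5 j3 ((s_swap12 hsym y x e').trans k3) k5 h2.symm
      · exact h3 rfl
      · exact h3 rfl
  · have hX1 : δ x e e' = a ∨ δ x e e' = c := by
      rcases Q1 with ⟨h1, -, -⟩ | ⟨h1, -, -⟩ | ⟨h1, -, -⟩ | ⟨-, h2, -⟩
      · exact absurd h1 hac
      · exact absurd h1 hac
      · exact Or.inl h1.symm
      · exact Or.inr h2.symm
    have Q2 := quad_pattern hsym h4pt ⟨hxz, hxe, hxe', hze, hze', hee'⟩
    rw [j3, k1] at Q2
    have hX2 : δ x e e' = b ∨ δ x e e' = a := by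
      rcases Q2 with ⟨h1, -, -⟩ | ⟨h1, -, -⟩ | ⟨h1, -, -⟩ | ⟨-, h2, -⟩
      · exact absurd h1.symm hab
      · exact absurd h1.symm hab
      · exact Or.inl h1.symm
      · exact Or.inr h2.symm
    have Q3 := quad_pattern hsym h4pt ⟨hxu, hxe, hxe', hue, hue', hee'⟩
    rw [j4, k4] at Q3
    have hX3 : δ x e e' = b ∨ δ x e e' = c := by
      rcases Q3 with ⟨h1, -, -⟩ | ⟨h1, -, -⟩ | ⟨h1, -, -⟩ | ⟨-, h2, -⟩
      · exact absurd h1 hbc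
      · exact absurd h1 hbc
      · exact Or.inl h1.symm
      · exact Or.inr h2.symm
    rcases hX1 with h | h <;> rcases hX3 with h' | h'
    · exact hab (h.symm.trans h')
    · exact hac (h.symm.trans h')
    · exact hbc (h'.symm.trans h)
    · rcases hX2 with h'' | h''
      · exact hbc (h''.symm.trans h)
      · exact hac (h''.symm.trans h)

end Helpers

set_option maxHeartbeats 1000000 in
/-- Lemma 2. If `δ` is constant on the 3-subsets of `{x,y,z,u}` and
both `e` and `e'` 4-6-partition `{x,y,z,u}` together with it, with `e` resolving as
`xy|zu`, then `e'` resolves in the same way. -/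
theorem resolving_taxa_agree
    {X M : Type} [Fintype X] [DecidableEq X] [Fintype M] [Nonempty M]
    (hX : 3 ≤ Fintype.card X)
    (δ : X → X → X → Option M) (hδ : IsSymbolicTernaryMetric δ)
    (x y z u e e' : X) (h4 : P4 x y z u)
    (he : e ≠ x ∧ e ≠ y ∧ e ≠ z ∧ e ≠ u)
    (he' : e' ≠ x ∧ e' ≠ y ∧ e' ≠ z ∧ e' ≠ u)
    (hone : ({δ x y z, δ x y u, δ x z u, δ y z u} : Set (Option M)).ncard = 1)
    (hp : Partitioned δ ({x, y, z, u, e} : Finset X) 4 6)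
    (hp' : Partitioned δ ({x, y, z, u, e'} : Finset X) 4 6)
    (heq : δ x y e = δ x y z ∧ δ x y z = δ x y u ∧ δ x y u = δ x z u ∧
      δ x z u = δ z u e ∧ δ z u e = δ y z u)
    (hne : δ x y z ≠ δ x u e)
    (heq' : δ x u e = δ x z e ∧ δ x z e = δ y z e ∧ δ y z e = δ y u e) :
    (δ x y e' = δ x y z ∧ δ z u e' = δ x y z) ∧
    δ x y z ≠ δ x u e' ∧
    (δ x u e' = δ x z e' ∧ δ x z e' = δ y z e' ∧ δ y z e' = δ y u e') := by
  obtain ⟨hsym, hvan, h4pt, h5pt⟩ := hδ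
  obtain ⟨hxy, hxz, hxu, hyz, hyu, hzu⟩ := h4
  have hxe : x ≠ e := he.1.symm
  have hye : y ≠ e := he.2.1.symm
  have hze : z ≠ e := he.2.2.1.symm
  have hue : u ≠ e := he.2.2.2.symm
  have hxe' : x ≠ e' := he'.1.symm
  have hye' : y ≠ e' := he'.2.1.symm
  have hze' : z ≠ e' := he'.2.2.1.symm
  have hue' : u ≠ e' := he'.2.2.2.symm
  have hxyu : δ x y u = δ x y z := heq.2.1.symm
  have hxzu : δ x z u = δ x y z := (heq.2.1.trans heq.2.2.1).symm
  have hzue : δ z u e = δ x y z := heq.2.2.2.1.symm.trans hxzu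
  have hyzu : δ y z u = δ x y z := heq.2.2.2.2.symm.trans hzue
  have hxze : δ x z e = δ x u e := heq'.1.symm
  have hyze : δ y z e = δ x u e := (heq'.1.trans heq'.2.1).symm
  have hyue : δ y u e = δ x u e := (heq'.1.trans (heq'.2.1.trans heq'.2.2)).symm
  by_cases hee' : e = e'
  · subst hee'
    exact ⟨⟨heq.1, hzue⟩, hne, heq'⟩
  have T1 := quad_pattern hsym h4pt ⟨hxy, hxz, hxe', hyz, hye', hze'⟩
  have T2 := quad_pattern hsym h4pt ⟨hxy, hxu, hxe', hyu, hye', hue'⟩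
  rw [hxyu] at T2
  have T3 := quad_pattern hsym h4pt ⟨hxz, hxu, hxe', hzu, hze', hue'⟩
  rw [hxzu] at T3
  have T4 := quad_pattern hsym h4pt ⟨hyz, hyu, hye', hzu, hze', hue'⟩
  rw [hyzu] at T4
  have hsA : ({x, y, u, z, e'} : Finset X) = {x, y, z, u, e'} := by rw [Finset.insert_comm u z]
  have hsB : ({x, z, u, y, e'} : Finset X) = {x, y, z, u, e'} := by rw [Finset.insert_comm u y, Finset.insert_comm z y]
  have hsC : ({y, z, u, x, e'} : Finset X) = {x, y, z, u, e'} := by rw [Finset.insert_comm u x, Finset.insert_comm z x, Finset.insert_comm y x]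
  rcases T1 with ⟨t11, t12, t13⟩ | ⟨t11, t12, t13⟩ | ⟨t11, t12, t13⟩ | ⟨t11, t12, t13⟩
  · -- T1 all equal: g1 = g2 = g4 = a
    rcases T2 with ⟨s11, s12, s13⟩ | ⟨s11, s12, s13⟩ | ⟨s11, s12, s13⟩ | ⟨s11, s12, s13⟩
    · rcases T3 with ⟨r11, r12, r13⟩ | ⟨r11, r12, r13⟩ | ⟨r11, r12, r13⟩ | ⟨r11, r12, r13⟩
      · exact (full_count hsym hxy hxz hxu hxe' hyz hyu hye' hzu hze' hue' rfl hxyu hxzu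
          hyzu t11.symm t12.symm t13.symm s12.symm s13.symm r13.symm hp').elim
      · exact (r13 s12).elim
      · exact (r13 t12).elim
      · exact (r13 t12).elim
    · rcases T3 with ⟨r11, r12, r13⟩ | ⟨r11, r12, r13⟩ | ⟨r11, r12, r13⟩ | ⟨r11, r12, r13⟩
      · exact (s13 r12).elim
      · exact (triangle_count hsym hxy hxz hxu hxe' hyz hyu hye' hzu hze' hue' s13 rfl
          hxyu hxzu hyzu t11.symm t12.symm t13.symm rfl s12.symm r12.symm hp').elim
      · exact (s13 r11).elim
      · exact (r13 t12).elim
    · exact (s13 t11).elim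
    · exact (s13 t11).elim
  · -- T1 D2: g1 = a, g2 = g4, a ≠ g2
    rcases T3 with ⟨r11, r12, r13⟩ | ⟨r11, r12, r13⟩ | ⟨r11, r12, r13⟩ | ⟨r11, r12, r13⟩
    · exact (t13 r11).elim
    · exact (t13 r11).elim
    · rcases T2 with ⟨s11, s12, s13⟩ | ⟨s11, s12, s13⟩ | ⟨s11, s12, s13⟩ | ⟨s11, s12, s13⟩
      · exact (triangle_count hsym hxy hxu hxz hxe' hyu hyz hye' hzu.symm hue' hze' t13
          hxyu rfl ((s_swap23 hsym x u z).trans hxzu) ((s_swap23 hsym y u z).trans hyzu)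
          t11.symm s12.symm s13.symm rfl t12.symm
          ((s_swap12 hsym u z e').trans r12.symm) (by rw [hsA]; exact hp')).elim
      · exact (s13 r11).elim
      · exact (s13 t11).elim
      · exact (s13 t11).elim
    · rcases T2 with ⟨s11, s12, s13⟩ | ⟨s11, s12, s13⟩ | ⟨s11, s12, s13⟩ | ⟨s11, s12, s13⟩
      · exact (t13 (s12.trans r12.symm)).elim
      · exact ⟨⟨t11.symm, r11.symm⟩, s13, r12.symm, t12, t12.symm.trans (r12.trans s12)⟩
      · exact (t13 (s11.trans r12.symm)).elim
      · exact (s13 t11).elim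
  · -- T1 D3: g2 = a, g1 = g4, a ≠ g1
    rcases T4 with ⟨r11, r12, r13⟩ | ⟨r11, r12, r13⟩ | ⟨r11, r12, r13⟩ | ⟨r11, r12, r13⟩
    · exact (t13 (r11.trans t12.symm)).elim
    · exact (t13 (r11.trans t12.symm)).elim
    · rcases T2 with ⟨s11, s12, s13⟩ | ⟨s11, s12, s13⟩ | ⟨s11, s12, s13⟩ | ⟨s11, s12, s13⟩
      · exact (t13 s11).elim
      · exact (t13 s11).elim
      · exact (s13 (s12.trans r11.symm).symm).elim
      · exact (bad_matching hsym h4pt h5pt hxy hxz hxu hxe hxe' hyz hyu hye hye' hzu hze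
          hze' hue hue' hee' rfl hxyu heq.1 hxze rfl hyze hyue t11.symm r11.symm rfl
          s12.symm t12.symm hne t13).elim
    · rcases T3 with ⟨q11, q12, q13⟩ | ⟨q11, q12, q13⟩ | ⟨q11, q12, q13⟩ | ⟨q11, q12, q13⟩
      · exact (triangle_count hsym hxz hxu hxy hxe' hzu hyz.symm hze' hyu.symm hue' hye'
          t13 hxzu (s_swap23 hsym x z y) ((s_swap23 hsym x u y).trans hxyu)
          ((s_rot hsym y z u).symm.trans hyzu) t11.symm q12.symm q13.symm rfl
          ((s_swap12 hsym z y e').trans t12.symm)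
          ((s_swap12 hsym u y e').trans (r12.symm.trans t12.symm))
          (by rw [hsB]; exact hp')).elim
      · exact (q13 (r11.trans q12.symm)).elim
      · exact (q13 t11).elim
      · exact (q13 t11).elim
  · -- T1 D4: g4 = a, g1 = g2, a ≠ g1
    rcases T2 with ⟨s11, s12, s13⟩ | ⟨s11, s12, s13⟩ | ⟨s11, s12, s13⟩ | ⟨s11, s12, s13⟩
    · exact (t13 s11).elim
    · exact (t13 s11).elim
    · rcases T3 with ⟨q11, q12, q13⟩ | ⟨q11, q12, q13⟩ | ⟨q11, q12, q13⟩ | ⟨q11, q12, q13⟩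
      · exact (t13 (q11.trans t12.symm)).elim
      · exact (t13 (q11.trans t12.symm)).elim
      · exact (bad_matching hsym h4pt h5pt hxy hxu hxz hxe hxe' hyu hyz hye hye' hzu.symm
          hue hue' hze hze' hee' hxyu rfl heq.1 rfl hxze hyue hyze s11.symm t11.symm rfl
          t12.symm s12.symm hne t13).elim
      · exact (q13 (s11.trans q12.symm)).elim
    · rcases T4 with ⟨r11, r12, r13⟩ | ⟨r11, r12, r13⟩ | ⟨r11, r12, r13⟩ | ⟨r11, r12, r13⟩
      · exact (triangle_count hsym hyz hyu hxy.symm hye' hzu hxz.symm hze' hxu.symm hue'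
          hxe' t13 hyzu (s_rot hsym x y z).symm ((s_rot hsym x y u).symm.trans hxyu)
          ((s_rot hsym x z u).symm.trans hxzu) t11.symm s11.symm r13.symm
          (s_swap12 hsym y x e') ((s_swap12 hsym z x e').trans t12.symm)
          ((s_swap12 hsym u x e').trans s12.symm) (by rw [hsC]; exact hp')).elim
      · exact (r13 s11).elim
      · exact (r13 t11).elim
      · exact (r13 t11).elim

end PhyloPaper
end
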